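/- arXiv:1510.05260 — 9 statements merged into one kernel-verified Lean document; each statement's English description precedes it below -/
import Mathlib

section
/- Let k ≥ 3 be an integer and set c = k/(k−1). There exists N₀ (possibly depending on k) such that for every integer N ≥ N₀ the following holds: if S is a set of integers containing no arithmetic progression of length k, a₀ is a non-negative integer, and a₁, …, a_d are positive integers (not necessarily distinct) such that every element of the Hilbert cube H(a₀; a₁, …, a_d) lies in S ∩ [1, N], then d ≤ (2(k−2)/((k−1) log c)) · log N + 2/log c + 1. -/
open Finset

/-- Step lemma: if `A` has no `k`-term AP with difference `t > 0`, then
`A ∪ (A + t)` is larger than `A` by a factor `k/(k-1)`. -/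
lemma step_lemma (k : ℕ) (hk : 3 ≤ k) (A : Finset ℤ) (t : ℤ) (ht : 0 < t)
    (hAP : ¬ ∃ x : ℤ, ∀ j : ℕ, j < k → x + (j : ℤ) * t ∈ A) :
    k * A.card ≤ (k - 1) * (A ∪ A.image (· + t)).card := by
  classical
  rcases A.eq_empty_or_nonempty with rfl | hA
  · simp
  set B := A.image (· + t) with hB
  have hex : ∀ x ∈ A, ∃ m : ℕ, x - ((m : ℤ) + 1) * t ∉ A := by
    intro x hx
    refine ⟨(x - A.min' hA).toNat, fun hmem => ?_⟩
    have h1 := A.min'_le _ hmem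
    have h3 : (x - A.min' hA) ≤ ((x - A.min' hA).toNat : ℤ) := Int.self_le_toNat _
    have h0 : (0 : ℤ) ≤ ((x - A.min' hA).toNat : ℤ) := Int.natCast_nonneg _
    nlinarith
  set g : ℤ → ℤ := fun x =>
    if h : ∃ m : ℕ, x - ((m : ℤ) + 1) * t ∉ A then x - (Nat.find h : ℤ) * t else x with hg
  have hfind_le : ∀ x ∈ A, ∀ (h : ∃ m : ℕ, x - ((m : ℤ) + 1) * t ∉ A),
      Nat.find h ≤ k - 2 := by
    intro x hx h
    by_contra hcon
    push_neg at hcon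
    have hall : ∀ i : ℕ, i ≤ k - 1 → x - (i : ℤ) * t ∈ A := by
      intro i hi
      rcases i with _ | i
      · simpa using hx
      · have hlt : i < Nat.find h := by omega
        have h' : x - ((i : ℤ) + 1) * t ∈ A := not_not.mp (Nat.find_min h hlt)
        push_cast
        exact h'
    refine hAP ⟨x - ((k : ℤ) - 1) * t, fun j hj => ?_⟩
    have hj' : k - 1 - j ≤ k - 1 := by omega
    have hmem := hall (k - 1 - j) hj'
    have hcast : ((k - 1 - j : ℕ) : ℤ) = (k : ℤ) - 1 - j := by
      have h2 : j ≤ k - 1 := by omega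
      have h1 : (1 : ℕ) ≤ k := by omega
      push_cast [Nat.cast_sub h2, Nat.cast_sub h1]
      ring
    rw [hcast] at hmem
    convert hmem using 1
    ring
  have hgmem : ∀ x ∈ A, g x ∈ A \ B := by
    intro x hx
    have h := hex x hx
    rw [mem_sdiff]
    simp only [hg, dif_pos h]
    constructor
    · rcases Nat.eq_zero_or_pos (Nat.find h) with h0 | h0
      · simpa [h0] using hx
      · have hlt : Nat.find h - 1 < Nat.find h := by omega
        have h' : x - (((Nat.find h - 1 : ℕ) : ℤ) + 1) * t ∈ A := not_not.mp (Nat.find_min h hlt)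
        have hcast2 : ((Nat.find h - 1 : ℕ) : ℤ) + 1 = (Nat.find h : ℤ) := by
          have h1 : (1 : ℕ) ≤ Nat.find h := h0
          push_cast [Nat.cast_sub h1]
          ring
        rw [hcast2] at h'
        exact h'
    · intro hmem
      rw [hB, mem_image] at hmem
      obtain ⟨y, hy, hyy⟩ := hmem
      have hy' : y = x - ((Nat.find h : ℤ) + 1) * t := by linarith
      exact (Nat.find_spec h) (by rw [← hy']; exact hy)
  have hfiber : ∀ y ∈ A \ B, (A.filter (fun x => g x = y)).card ≤ k - 1 := by
    intro y hy
    have hsub : A.filter (fun x => g x = y) ⊆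
        (range (k - 1)).image (fun m : ℕ => y + (m : ℤ) * t) := by
      intro x hx
      rw [mem_filter] at hx
      obtain ⟨hxA, hgx⟩ := hx
      have h := hex x hxA
      rw [mem_image]
      refine ⟨Nat.find h, ?_, ?_⟩
      · have := hfind_le x hxA h
        exact mem_range.2 (by omega)
      · simp only [hg, dif_pos h] at hgx
        linarith
    calc (A.filter (fun x => g x = y)).card ≤ _ := card_le_card hsub
      _ ≤ (range (k - 1)).card := card_image_le
      _ = k - 1 := card_range _
  have hcard : A.card ≤ (k - 1) * (A \ B).card :=
    card_le_mul_card_image_of_maps_to hgmem (k - 1) hfiber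
  have hBcard : B.card = A.card := card_image_of_injective _ (add_left_injective t)
  have h1 : (A ∪ B).card + (A ∩ B).card = A.card + B.card := card_union_add_card_inter A B
  have h2 : (A \ B).card + (A ∩ B).card = A.card := card_sdiff_add_card_inter A B
  obtain ⟨K, rfl⟩ : ∃ K, k = K + 1 := ⟨k - 1, by omega⟩
  have hu : (A ∪ B).card = A.card + (A \ B).card := by omega
  simp only [Nat.add_sub_cancel] at hcard ⊢
  nlinarith [hcard, hu]

/-- Cube growth: a Hilbert cube of dimension `m` with integer base, contained in
`S ∩ [1, N]` where `S` has no `k`-term AP, satisfies `k ^ m ≤ (k-1) ^ m * N`. -/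
lemma cube_lemma (k : ℕ) (hk : 3 ≤ k) (S : Set ℤ)
    (hS : ¬ ∃ (b t : ℤ), t ≠ 0 ∧ ∀ j : ℕ, j < k → b + (j : ℤ) * t ∈ S)
    (N : ℕ) (b : ℤ) (m : ℕ) (a : ℕ → ℤ) (ha : ∀ i, i < m → 0 < a i)
    (hmem : ∀ F : Finset ℕ, F ⊆ range m →
      (b + ∑ j ∈ F, a j) ∈ S ∧ 1 ≤ b + ∑ j ∈ F, a j ∧ b + ∑ j ∈ F, a j ≤ N) :
    k ^ m ≤ (k - 1) ^ m * N := by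
  classical
  let A : ℕ → Finset ℤ := fun i => Nat.rec {b} (fun i Ai => Ai ∪ Ai.image (· + a i)) i
  have hA0 : A 0 = {b} := rfl
  have hAsucc : ∀ i, A (i + 1) = A i ∪ (A i).image (· + a i) := fun i => rfl
  have hrepr : ∀ i, i ≤ m → ∀ x ∈ A i, ∃ F : Finset ℕ, F ⊆ range i ∧ x = b + ∑ j ∈ F, a j := by
    intro i
    induction i with
    | zero =>
      intro _ x hx
      rw [hA0, mem_singleton] at hx
      exact ⟨∅, by simp, by simp [hx]⟩
    | succ i ih =>
      intro hi x hx
      rw [hAsucc, mem_union] at hx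
      rcases hx with hx | hx
      · obtain ⟨F, hF, hFx⟩ := ih (by omega) x hx
        exact ⟨F, hF.trans (range_subset_range.2 (by omega)), hFx⟩
      · rw [mem_image] at hx
        obtain ⟨y, hy, rfl⟩ := hx
        obtain ⟨F, hF, rfl⟩ := ih (by omega) y hy
        have hiF : i ∉ F := fun h => by simpa using (mem_range.1 (hF h))
        refine ⟨insert i F, ?_, ?_⟩
        · intro j hj
          rw [mem_insert] at hj
          rcases hj with rfl | hj
          · exact mem_range.2 (by omega)
          · exact range_subset_range.2 (by omega) (hF hj)
        · rw [sum_insert hiF]; ring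
  have hin : ∀ i, i ≤ m → ∀ x ∈ A i, x ∈ S ∧ 1 ≤ x ∧ x ≤ N := by
    intro i hi x hx
    obtain ⟨F, hF, rfl⟩ := hrepr i hi x hx
    exact hmem F (hF.trans (range_subset_range.2 hi))
  have hgrow : ∀ i, i < m → k * (A i).card ≤ (k - 1) * (A (i + 1)).card := by
    intro i hi
    rw [hAsucc]
    refine step_lemma k hk (A i) (a i) (ha i hi) ?_
    rintro ⟨x, hx⟩
    refine hS ⟨x, a i, (ha i hi).ne', fun j hj => ?_⟩
    exact (hin i (by omega) _ (hx j hj)).1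
  have hpow : ∀ i, i ≤ m → k ^ i ≤ (k - 1) ^ i * (A i).card := by
    intro i
    induction i with
    | zero => intro _; simp [hA0]
    | succ i ih =>
      intro hi
      have h1 := ih (by omega)
      have h2 := hgrow i (by omega)
      calc k ^ (i + 1) = k * k ^ i := by ring
        _ ≤ k * ((k - 1) ^ i * (A i).card) := Nat.mul_le_mul_left _ h1
        _ = (k - 1) ^ i * (k * (A i).card) := by ring
        _ ≤ (k - 1) ^ i * ((k - 1) * (A (i + 1)).card) := Nat.mul_le_mul_left _ h2
        _ = (k - 1) ^ (i + 1) * (A (i + 1)).card := by ring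
  have hsub : A m ⊆ Finset.Icc (1 : ℤ) N := by
    intro x hx
    have := hin m le_rfl x hx
    exact Finset.mem_Icc.2 ⟨this.2.1, this.2.2⟩
  have hcard : (A m).card ≤ N := by
    calc (A m).card ≤ (Finset.Icc (1 : ℤ) N).card := card_le_card hsub
      _ = N := by rw [Int.card_Icc]; simp
  calc k ^ m ≤ (k - 1) ^ m * (A m).card := hpow m le_rfl
    _ ≤ (k - 1) ^ m * N := Nat.mul_le_mul_left _ hcard

/-- Hilbert cubes in sets without arithmetic progressions of length `k`. -/
theorem stmt_2 (k : ℕ) (hk : 3 ≤ k) :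
    ∃ N₀ : ℕ, ∀ N : ℕ, N₀ ≤ N →
      ∀ S : Set ℤ,
        (¬ ∃ (b t : ℤ), t ≠ 0 ∧ ∀ j : ℕ, j < k → b + (j : ℤ) * t ∈ S) →
        ∀ (d : ℕ) (a₀ : ℕ) (a : Fin d → ℕ),
          (∀ i, 0 < a i) →
          (∀ F : Finset (Fin d), (a₀ = 0 → F.Nonempty) →
            ((a₀ + ∑ i ∈ F, a i : ℕ) : ℤ) ∈ S ∧
            1 ≤ a₀ + ∑ i ∈ F, a i ∧ a₀ + ∑ i ∈ F, a i ≤ N) →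
          (d : ℝ) ≤ 2 * ((k : ℝ) - 2) / (((k : ℝ) - 1) *
              Real.log ((k : ℝ) / ((k : ℝ) - 1))) * Real.log N
            + 2 / Real.log ((k : ℝ) / ((k : ℝ) - 1)) + 1 := by
  classical
  refine ⟨1, fun N hN S hS d a₀ a ha hcube => ?_⟩
  have hk3 : (3 : ℝ) ≤ (k : ℝ) := by exact_mod_cast hk
  have hc1 : (1 : ℝ) < (k : ℝ) / ((k : ℝ) - 1) := by
    rw [lt_div_iff₀ (by linarith)]; linarith
  have hlogc : 0 < Real.log ((k : ℝ) / ((k : ℝ) - 1)) := Real.log_pos hc1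
  have hN1 : (1 : ℝ) ≤ (N : ℝ) := by exact_mod_cast hN
  have hlogN : 0 ≤ Real.log N := Real.log_nonneg hN1
  set c := Real.log ((k : ℝ) / ((k : ℝ) - 1)) with hc
  have hterm1 : 0 ≤ 2 * ((k : ℝ) - 2) / (((k : ℝ) - 1) * c) * Real.log N :=
    mul_nonneg (div_nonneg (by linarith)
      (mul_pos (by linarith : (0 : ℝ) < (k : ℝ) - 1) hlogc).le) hlogN
  rcases Nat.eq_zero_or_pos d with rfl | hd
  · simp only [Nat.cast_zero]
    have h2c : 0 ≤ 2 / c := by positivity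
    linarith
  obtain ⟨d', rfl⟩ : ∃ d', d = d' + 1 := ⟨d - 1, by omega⟩
  set i₀ : Fin (d' + 1) := ⟨d', by omega⟩ with hi₀def
  set b : ℤ := (a₀ : ℤ) + (a i₀ : ℤ) with hb
  set a' : ℕ → ℤ := fun j => if h : j < d' then (a ⟨j, by omega⟩ : ℤ) else 1 with ha'
  have key : k ^ d' ≤ (k - 1) ^ d' * N := by
    apply cube_lemma k hk S hS N b d' a'
    · intro i hi
      simp only [ha', dif_pos hi]
      exact_mod_cast ha _
    · intro F hF
      have hFlt : ∀ j ∈ F, j < d' + 1 := fun j hj => by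
        have := mem_range.1 (hF hj); omega
      set F' : Finset (Fin (d' + 1)) := insert i₀ (F.attachFin hFlt) with hF'
      have hi₀ : i₀ ∉ F.attachFin hFlt := by
        intro h
        rw [mem_attachFin] at h
        have := mem_range.1 (hF h)
        simp only [hi₀def] at this
        omega
      have hsum2 : ∑ i ∈ F.attachFin hFlt, (a i : ℤ) = ∑ j ∈ F, a' j := by
        apply Finset.sum_bij (fun (i : Fin (d' + 1)) (_ : i ∈ F.attachFin hFlt) => (i : ℕ))
        · intro i hi; exact (mem_attachFin _).1 hi
        · intro i hi j hj hij; exact Fin.val_injective hij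
        · intro j hj
          exact ⟨⟨j, hFlt j hj⟩, (mem_attachFin _).2 hj, rfl⟩
        · intro i hi
          have hlt : (i : ℕ) < d' := mem_range.1 (hF ((mem_attachFin _).1 hi))
          simp only [ha', dif_pos hlt]
      have hsum : (b + ∑ j ∈ F, a' j) = ((a₀ + ∑ i ∈ F', a i : ℕ) : ℤ) := by
        rw [hF', sum_insert hi₀]
        push_cast
        rw [hb, ← hsum2]
        ring
      have hc' := hcube F' (fun _ => ⟨i₀, mem_insert_self _ _⟩)
      refine ⟨by rw [hsum]; exact hc'.1, ?_, ?_⟩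
      · rw [hsum]; exact_mod_cast hc'.2.1
      · rw [hsum]; exact_mod_cast hc'.2.2
  have hk1 : (1 : ℕ) ≤ k := by omega
  have hkey : ((k : ℝ)) ^ d' ≤ ((k : ℝ) - 1) ^ d' * N := by
    calc ((k : ℝ)) ^ d' = ((k ^ d' : ℕ) : ℝ) := by push_cast; ring
      _ ≤ (((k - 1) ^ d' * N : ℕ) : ℝ) := by exact_mod_cast key
      _ = ((k : ℝ) - 1) ^ d' * N := by push_cast [Nat.cast_sub hk1]; ring
  have hlogk : (d' : ℝ) * Real.log k ≤ (d' : ℝ) * Real.log ((k : ℝ) - 1) + Real.log N := by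
    have hkpos : (0 : ℝ) < (k : ℝ) := by linarith
    have hk1pos : (0 : ℝ) < (k : ℝ) - 1 := by linarith
    have h1 : Real.log ((k : ℝ) ^ d') ≤ Real.log (((k : ℝ) - 1) ^ d' * N) :=
      Real.log_le_log (pow_pos hkpos _) hkey
    rw [Real.log_pow, Real.log_mul (pow_ne_zero _ hk1pos.ne')
      (by linarith : (0 : ℝ) < (N : ℝ)).ne', Real.log_pow] at h1
    exact_mod_cast h1
  have hcval : c = Real.log k - Real.log ((k : ℝ) - 1) := by
    rw [hc, Real.log_div (by linarith : (0 : ℝ) < (k : ℝ)).ne'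
      (by linarith : (0 : ℝ) < (k : ℝ) - 1).ne']
  have hd'c : (d' : ℝ) * c ≤ Real.log N := by rw [hcval]; nlinarith
  have hd'le : (d' : ℝ) ≤ Real.log N / c := by
    rw [le_div_iff₀ hlogc]; exact hd'c
  have hcoef : (1 : ℝ) ≤ 2 * ((k : ℝ) - 2) / ((k : ℝ) - 1) := by
    rw [le_div_iff₀ (by linarith)]; linarith
  have h2 : Real.log N ≤ 2 * ((k : ℝ) - 2) / ((k : ℝ) - 1) * Real.log N + 2 := by
    nlinarith
  have hq : 0 ≤ Real.log N / c := div_nonneg hlogN hlogc.le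
  have heq : 2 * ((k : ℝ) - 2) / (((k : ℝ) - 1) * c) * Real.log N
      = (2 * ((k : ℝ) - 2) / ((k : ℝ) - 1)) * (Real.log N / c) := by
    rw [← div_div]; ring
  have h2c : 0 ≤ 2 / c := by positivity
  have h3 : Real.log N / c ≤ 2 * ((k : ℝ) - 2) / (((k : ℝ) - 1) * c) * Real.log N + 2 / c := by
    rw [heq]
    nlinarith [hq, hcoef]
  push_cast
  linarith
end

section
/- Let k ≥ 3 be an integer and let S be a set of integers containing no arithmetic progression of length k. Let a₀ be an integer and a₁, …, a_d nonzero integers (not necessarily distinct) such that every element of the Hilbert cube H = H(a₀; a₁, …, a_d) lies in S. Then the number of distinct elements of H satisfies |H| ≥ 2·(k/(k−1))^{d−1} − 1. -/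
private lemma key_lemma (k : ℕ) (hk : 3 ≤ k) (S : Set ℤ)
    (hS : ¬ ∃ (b t : ℤ), t ≠ 0 ∧ ∀ j : ℕ, j < k → b + (j : ℤ) * t ∈ S)
    (A : Finset ℤ) (hA : A.Nonempty) (a : ℤ) (ha : a ≠ 0)
    (h1 : ∀ x ∈ A, x ∈ S) (h2 : ∀ x ∈ A, x + a ∈ S) :
    (A.card + 1) * k ≤ ((A ∪ A.image (· + a)).card + 1) * (k - 1) := by
  classical
  set B := A ∪ A.image (· + a) with hBdef
  have hBS : ∀ x ∈ B, x ∈ S := by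
    intro x hx
    rcases Finset.mem_union.mp hx with h | h
    · exact h1 x h
    · obtain ⟨y, hy, rfl⟩ := Finset.mem_image.mp h
      exact h2 y hy
  have hex : ∀ x : ℤ, ∃ j : ℕ, x + ((j : ℤ) + 1) * a ∉ B := by
    intro x
    by_contra h
    push_neg at h
    refine hS ⟨x + a, a, ha, fun j _ => ?_⟩
    have e : x + a + (j : ℤ) * a = x + ((j : ℤ) + 1) * a := by ring
    rw [e]
    exact hBS _ (h j)
  set m : ℤ → ℕ := fun x => Nat.find (hex x) with hmdef
  set f : ℤ → ℤ := fun x => x + (m x : ℤ) * a with hfdef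
  have hm_spec : ∀ x : ℤ, x + ((m x : ℤ) + 1) * a ∉ B := fun x => Nat.find_spec (hex x)
  have hm_min : ∀ (x : ℤ) (j : ℕ), j < m x → x + ((j : ℤ) + 1) * a ∈ B := by
    intro x j hj
    have := Nat.find_min (hex x) hj
    simpa using this
  have hfB : ∀ x ∈ B, f x ∈ B := by
    intro x hx
    show x + (m x : ℤ) * a ∈ B
    rcases Nat.eq_zero_or_pos (m x) with h0 | hpos
    · rw [h0]; simpa using hx
    · obtain ⟨i, hi⟩ : ∃ i, m x = i + 1 := ⟨m x - 1, by omega⟩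
      have hmem := hm_min x i (by omega)
      rw [hi]
      have e : ((i + 1 : ℕ) : ℤ) = (i : ℤ) + 1 := by push_cast; ring
      rw [e]
      exact hmem
  have hfA : ∀ x ∈ B, f x ∉ A := by
    intro x hx hfx
    apply hm_spec x
    have hmem : f x + a ∈ B := Finset.mem_union_right _ (Finset.mem_image_of_mem _ hfx)
    have e : f x + a = x + ((m x : ℤ) + 1) * a := by simp only [hfdef]; ring
    rwa [e] at hmem
  have hmlt : ∀ x ∈ B, m x < k - 1 := by
    intro x hx
    by_contra hc
    push_neg at hc
    apply hS
    refine ⟨x, a, ha, fun j hj => ?_⟩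
    rcases Nat.eq_zero_or_pos j with rfl | hj0
    · simpa using hBS x hx
    · obtain ⟨i, rfl⟩ : ∃ i, j = i + 1 := ⟨j - 1, by omega⟩
      have hmem := hm_min x i (by omega)
      have e : x + ((i + 1 : ℕ) : ℤ) * a = x + ((i : ℤ) + 1) * a := by push_cast; ring
      rw [e]
      exact hBS _ hmem
  have hfiber : ∀ y : ℤ, (B.filter (fun x => f x = y)).card ≤ k - 1 := by
    intro y
    have hsub : B.filter (fun x => f x = y) ⊆
        (Finset.range (k - 1)).image (fun j : ℕ => y - (j : ℤ) * a) := by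
      intro x hx
      rw [Finset.mem_filter] at hx
      rw [Finset.mem_image]
      refine ⟨m x, Finset.mem_range.mpr (hmlt x hx.1), ?_⟩
      have hxy : x + (m x : ℤ) * a = y := hx.2
      linarith
    calc (B.filter (fun x => f x = y)).card ≤ _ := Finset.card_le_card hsub
      _ ≤ (Finset.range (k - 1)).card := Finset.card_image_le
      _ = k - 1 := Finset.card_range _
  have hcard1 : B.card ≤ (k - 1) * (B \ A).card :=
    Finset.card_le_mul_card_image_of_maps_to
      (fun x hx => Finset.mem_sdiff.mpr ⟨hfB x hx, hfA x hx⟩) _ (fun y _ => hfiber y)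
  have hD1 : 1 ≤ (B \ A).card := by
    obtain ⟨x0, hx0⟩ := hA
    have hx0B : x0 ∈ B := Finset.mem_union_left _ hx0
    exact Finset.card_pos.mpr ⟨f x0, Finset.mem_sdiff.mpr ⟨hfB _ hx0B, hfA _ hx0B⟩⟩
  have hsum : (B \ A).card + A.card = B.card :=
    Finset.card_sdiff_add_card_eq_card Finset.subset_union_left
  have h3 : (B \ A).card + A.card ≤ (k - 1) * (B \ A).card := by rw [hsum]; exact hcard1
  have h4 : A.card + 1 ≤ (B \ A).card * (k - 1) := by
    calc A.card + 1 ≤ (B \ A).card + A.card := by omega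
      _ ≤ (k - 1) * (B \ A).card := h3
      _ = (B \ A).card * (k - 1) := mul_comm _ _
  have hB1 : B.card + 1 = (B \ A).card + (A.card + 1) := by omega
  have hk1 : k = (k - 1) + 1 := by omega
  have expand : (A.card + 1) * k = (A.card + 1) * (k - 1) + (A.card + 1) := by
    conv_lhs => rw [hk1]
    ring
  calc (A.card + 1) * k = (A.card + 1) * (k - 1) + (A.card + 1) := expand
    _ ≤ (A.card + 1) * (k - 1) + (B \ A).card * (k - 1) := by linarith
    _ = ((B \ A).card + (A.card + 1)) * (k - 1) := by ring
    _ = (B.card + 1) * (k - 1) := by rw [hB1]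

private lemma grow (k : ℕ) (hk : 3 ≤ k) (S : Set ℤ)
    (hS : ¬ ∃ (b t : ℤ), t ≠ 0 ∧ ∀ j : ℕ, j < k → b + (j : ℤ) * t ∈ S)
    {ι : Type} [DecidableEq ι] (c : ι → ℤ) (b : ℤ) :
    ∀ s : Finset ι, (∀ i ∈ s, c i ≠ 0) →
      (∀ F ∈ s.powerset, b + ∑ i ∈ F, c i ∈ S) →
      2 * ((k : ℝ) / ((k : ℝ) - 1)) ^ s.card ≤
        ((s.powerset.image (fun F => b + ∑ i ∈ F, c i)).card : ℝ) + 1 := by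
  have hk3 : (3 : ℝ) ≤ (k : ℝ) := by exact_mod_cast hk
  have hkpos : (0 : ℝ) < (k : ℝ) - 1 := by linarith
  intro s
  induction s using Finset.induction_on with
  | empty =>
    intro _ _
    norm_num
  | @insert i t hit ih =>
    intro hc hsub
    set A := t.powerset.image (fun F => b + ∑ j ∈ F, c j) with hAdef
    have hAne : A.Nonempty :=
      ⟨b + ∑ j ∈ (∅ : Finset ι), c j, Finset.mem_image_of_mem _ (Finset.empty_mem_powerset t)⟩
    have hci : c i ≠ 0 := hc i (Finset.mem_insert_self i t)
    have hAS : ∀ x ∈ A, x ∈ S := by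
      intro x hx
      obtain ⟨F, hF, rfl⟩ := Finset.mem_image.mp hx
      exact hsub F (Finset.powerset_mono.mpr (Finset.subset_insert i t) hF)
    have hAaS : ∀ x ∈ A, x + c i ∈ S := by
      intro x hx
      obtain ⟨F, hF, rfl⟩ := Finset.mem_image.mp hx
      rw [Finset.mem_powerset] at hF
      have hiF : i ∉ F := fun h => hit (hF h)
      have e : b + ∑ j ∈ F, c j + c i = b + ∑ j ∈ insert i F, c j := by
        rw [Finset.sum_insert hiF]; ring
      rw [e]
      exact hsub _ (Finset.mem_powerset.mpr (Finset.insert_subset_insert i hF))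
    have hBeq : (insert i t).powerset.image (fun F => b + ∑ j ∈ F, c j)
        = A ∪ A.image (· + c i) := by
      rw [Finset.powerset_insert, Finset.image_union]
      congr 1
      rw [hAdef, Finset.image_image, Finset.image_image]
      apply Finset.image_congr
      intro F hF
      simp only [Function.comp]
      rw [Finset.mem_coe, Finset.mem_powerset] at hF
      rw [Finset.sum_insert (fun h => hit (hF h))]
      ring
    have hkey := key_lemma k hk S hS A hAne (c i) hci hAS hAaS
    have hcast : ((A.card : ℝ) + 1) * (k : ℝ) ≤
        (((A ∪ A.image (· + c i)).card : ℝ) + 1) * ((k : ℝ) - 1) := by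
      have hcast0 : (((A.card + 1) * k : ℕ) : ℝ) ≤
          ((((A ∪ A.image (· + c i)).card + 1) * (k - 1) : ℕ) : ℝ) := Nat.cast_le.mpr hkey
      push_cast [Nat.cast_sub (show 1 ≤ k by omega)] at hcast0
      linarith
    have ihh := ih (fun j hj => hc j (Finset.mem_insert_of_mem hj))
      (fun F hF => hsub F (Finset.powerset_mono.mpr (Finset.subset_insert i t) hF))
    rw [hBeq, Finset.card_insert_of_notMem hit, pow_succ]
    have hr0 : (0 : ℝ) ≤ (k : ℝ) / ((k : ℝ) - 1) := by positivity
    calc 2 * (((k : ℝ) / ((k : ℝ) - 1)) ^ t.card * ((k : ℝ) / ((k : ℝ) - 1)))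
        = (2 * ((k : ℝ) / ((k : ℝ) - 1)) ^ t.card) * ((k : ℝ) / ((k : ℝ) - 1)) := by ring
      _ ≤ ((A.card : ℝ) + 1) * ((k : ℝ) / ((k : ℝ) - 1)) :=
          mul_le_mul_of_nonneg_right ihh hr0
      _ ≤ ((A ∪ A.image (· + c i)).card : ℝ) + 1 := by
          rw [← mul_div_assoc, div_le_iff₀ hkpos]
          exact hcast

/-- A cube lemma for progression-free sets: exponential growth.
If `S` has no arithmetic progression of length `k` and the Hilbert cube
`H(a₀; a₁, …, a_d)` lies in `S`, then `|H| ≥ 2 (k/(k-1))^(d-1) - 1`. -/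
theorem stmt_3 (k : ℕ) (hk : 3 ≤ k) (S : Set ℤ)
    (hS : ¬ ∃ (b t : ℤ), t ≠ 0 ∧ ∀ j : ℕ, j < k → b + (j : ℤ) * t ∈ S)
    (d : ℕ) (hd : 1 ≤ d) (a₀ : ℤ) (a : Fin d → ℤ) (ha : ∀ i, a i ≠ 0)
    (hH : ∀ F : Finset (Fin d), (a₀ = 0 → F.Nonempty) → a₀ + ∑ i ∈ F, a i ∈ S) :
    2 * ((k : ℝ) / ((k : ℝ) - 1)) ^ (d - 1) - 1 ≤
      (((Finset.univ.powerset.filter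
          (fun F : Finset (Fin d) => a₀ = 0 → F.Nonempty)).image
        (fun F => a₀ + ∑ i ∈ F, a i)).card : ℝ) := by
  have hk3 : (3 : ℝ) ≤ (k : ℝ) := by exact_mod_cast hk
  have hkpos : (0 : ℝ) < (k : ℝ) - 1 := by linarith
  have hr1 : (1 : ℝ) ≤ (k : ℝ) / ((k : ℝ) - 1) := by
    rw [le_div_iff₀ hkpos]; linarith
  by_cases ha₀ : a₀ = 0
  · subst ha₀
    set i₀ : Fin d := ⟨0, by omega⟩ with hi₀
    set s : Finset (Fin d) := Finset.univ.erase i₀ with hs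
    have hscard : s.card = d - 1 := by
      rw [hs, Finset.card_erase_of_mem (Finset.mem_univ _), Finset.card_univ, Fintype.card_fin]
    have hsub : ∀ F ∈ s.powerset, a i₀ + ∑ i ∈ F, a i ∈ S := by
      intro F hF
      rw [Finset.mem_powerset] at hF
      have hiF : i₀ ∉ F := fun h => (Finset.mem_erase.mp (hF h)).1 rfl
      have hmem := hH (insert i₀ F) (fun _ => ⟨i₀, Finset.mem_insert_self _ _⟩)
      rw [Finset.sum_insert hiF] at hmem
      simpa using hmem
    have hgrow := grow k hk S hS a (a i₀) s (fun j _ => ha j) hsub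
    rw [hscard] at hgrow
    have himg : s.powerset.image (fun F => a i₀ + ∑ i ∈ F, a i) ⊆
        (Finset.univ.powerset.filter
          (fun F : Finset (Fin d) => (0 : ℤ) = 0 → F.Nonempty)).image
          (fun F => 0 + ∑ i ∈ F, a i) := by
      intro y hy
      obtain ⟨F, hF, rfl⟩ := Finset.mem_image.mp hy
      rw [Finset.mem_powerset] at hF
      have hiF : i₀ ∉ F := fun h => (Finset.mem_erase.mp (hF h)).1 rfl
      refine Finset.mem_image.mpr ⟨insert i₀ F, ?_, ?_⟩
      · rw [Finset.mem_filter]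
        exact ⟨Finset.mem_powerset.mpr (Finset.subset_univ _),
          fun _ => ⟨i₀, Finset.mem_insert_self _ _⟩⟩
      · rw [Finset.sum_insert hiF]; ring
    have hle := Finset.card_le_card himg
    have hle' : ((s.powerset.image (fun F => a i₀ + ∑ i ∈ F, a i)).card : ℝ) ≤
        (((Finset.univ.powerset.filter
          (fun F : Finset (Fin d) => (0 : ℤ) = 0 → F.Nonempty)).image
          (fun F => 0 + ∑ i ∈ F, a i)).card : ℝ) := Nat.cast_le.mpr hle
    exact le_trans (by linarith) hle'
  · have hfilter : Finset.univ.powerset.filter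
        (fun F : Finset (Fin d) => a₀ = 0 → F.Nonempty) = Finset.univ.powerset := by
      apply Finset.filter_true_of_mem
      intro F _
      exact fun h => absurd h ha₀
    rw [hfilter]
    have hgrow := grow k hk S hS a a₀ Finset.univ (fun j _ => ha j)
      (fun F _ => hH F (fun h => absurd h ha₀))
    rw [Finset.card_univ, Fintype.card_fin] at hgrow
    have hpow : ((k : ℝ) / ((k : ℝ) - 1)) ^ (d - 1) ≤ ((k : ℝ) / ((k : ℝ) - 1)) ^ d :=
      pow_le_pow_right₀ hr1 (by omega)
    linarith
end

section
/- Let 0 < α < 1 be a real number, let h be a nonzero integer, and let B be a nonempty finite set of integers. If the number of elements b ∈ B with b − h ∈ B exceeds (1−α)|B| (that is, |B ∩ (B+h)| > (1−α)|B|), then B contains an arithmetic progression of length ⌊1/α⌋ + 1 with common difference h, i.e., there exists an integer b such that b, b+h, …, b+⌊1/α⌋·h all lie in B. -/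
/-!
Let `D = {x ∈ B : x - h ∉ B}`, so `|D| = |B| - |B ∩ (B + h)| < α|B|`. If `c ∈ B` is not the top
of a progression `c, c - h, …, c - kh` inside `B`, then walking down from `c` one leaves `B`
within `k` steps, and the last element reached lies in `D`; hence `c ∈ D + ih` for some `i < k`.
With `k = ⌊1/α⌋` these translates cover at most `k|D| < |B|` elements, so some `c ∈ B` is the
top of such a progression.
-/

namespace Finset

variable {G : Type*} [AddCommGroup G] [DecidableEq G]

theorem exists_lt_sub_nsmul_mem_filter_sub_notMem {B : Finset G} {h b : G} (hb : b ∈ B) :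
    ∀ {j : ℕ}, b - j • h ∉ B → ∃ i < j, b - i • h ∈ B.filter (fun x => x - h ∉ B)
  | 0, hj => absurd (by simpa using hb) hj
  | j + 1, hj => by
    by_cases hmem : b - j • h ∈ B
    · exact ⟨j, j.lt_succ_self, mem_filter.2 ⟨hmem, by rwa [sub_sub, ← succ_nsmul]⟩⟩
    · obtain ⟨i, hij, hi⟩ := exists_lt_sub_nsmul_mem_filter_sub_notMem hb hmem
      exact ⟨i, hij.trans j.lt_succ_self, hi⟩

theorem card_le_card_filter_forall_sub_nsmul_mem_add (B : Finset G) (h : G) (k : ℕ) :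
    #B ≤ #(B.filter fun c => ∀ j ≤ k, c - j • h ∈ B) +
      k * #(B.filter fun x => x - h ∉ B) := by
  set D := B.filter fun x => x - h ∉ B
  have hcover : B ⊆ (B.filter fun c => ∀ j ≤ k, c - j • h ∈ B) ∪
      (range k).biUnion fun i => D.map (addRightEmbedding (i • h)) := by
    intro c hc
    by_cases htop : ∀ j ≤ k, c - j • h ∈ B
    · exact mem_union_left _ (mem_filter.2 ⟨hc, htop⟩)
    · push Not at htop
      obtain ⟨j, hjk, hj⟩ := htop
      obtain ⟨i, hij, hi⟩ := exists_lt_sub_nsmul_mem_filter_sub_notMem hc hj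
      exact mem_union_right _ <| mem_biUnion.2
        ⟨i, mem_range.2 (hij.trans_le hjk), mem_map.2 ⟨_, hi, sub_add_cancel c _⟩⟩
  calc #B ≤ _ := card_le_card hcover
    _ ≤ _ := card_union_le _ _
    _ ≤ _ := by
      gcongr
      refine card_biUnion_le.trans_eq ?_
      simp only [card_map, sum_const, card_range, smul_eq_mul]

end Finset

open Finset in
theorem stmt_4_general (α : ℝ) (hα0 : 0 < α) (h : ℤ)
    (B : Finset ℤ)
    (hcount : (1 - α) * (B.card : ℝ) < ((B.filter (fun b => b - h ∈ B)).card : ℝ)) :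
    ∃ b : ℤ, ∀ j : ℕ, j ≤ ⌊1 / α⌋₊ → b + (j : ℤ) * h ∈ B := by
  set k := ⌊1 / α⌋₊
  set D := B.filter fun x => x - h ∉ B
  have hD : (#D : ℝ) < α * #B := by
    have hsplit : (#(B.filter fun b => b - h ∈ B) : ℝ) + #D = #B := by
      exact_mod_cast card_filter_add_card_filter_not (s := B) (fun b => b - h ∈ B)
    linarith
  have hkD : k * #D < #B := by
    suffices (k * #D : ℝ) < #B by exact_mod_cast this
    calc (k * #D : ℝ) ≤ 1 / α * #D := by gcongr; exact Nat.floor_le (by positivity)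
      _ < 1 / α * (α * #B) := by gcongr
      _ = #B := by field_simp
  obtain ⟨c, hc⟩ : (B.filter fun c => ∀ j ≤ k, c - j • h ∈ B).Nonempty := by
    rw [← card_pos]
    have : #B ≤ _ + k * #D := card_le_card_filter_forall_sub_nsmul_mem_add B h k
    omega
  refine ⟨c - k • h, fun j hj => ?_⟩
  convert (mem_filter.1 hc).2 (k - j) (Nat.sub_le k j) using 1
  simp only [nsmul_eq_mul, Nat.cast_sub hj]
  ring

/-- If `|B ∩ (B + h)| > (1 - α)|B|`, then `B` contains an arithmetic
progression of length `⌊1/α⌋ + 1` with common difference `h`. -/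
theorem stmt_4 (α : ℝ) (hα0 : 0 < α) (hα1 : α < 1) (h : ℤ) (hh : h ≠ 0)
    (B : Finset ℤ) (hB : B.Nonempty)
    (hcount : (1 - α) * (B.card : ℝ) < ((B.filter (fun b => b - h ∈ B)).card : ℝ)) :
    ∃ b : ℤ, ∀ j : ℕ, j ≤ ⌊1 / α⌋₊ → b + (j : ℤ) * h ∈ B :=
  stmt_4_general α hα0 h B hcount
end

section
/- The set V of pure powers contains no infinite Hilbert cube: there do not exist a non-negative integer a₀ and an infinite sequence a₁, a₂, a₃, … of positive integers such that a₀ + Σ_{i∈F} a_i is a pure power for every finite nonempty set F of indices. -/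
/-!
If every sum of a cube with sides `g` is a pure power and all these sums have the same `p`-adic
valuation `w ≠ 0`, then each of them is a `q`-th power for some prime `q ∣ w`. As only finitely
many exponents occur, among enough large sums lying close together two are `q`-th powers
`u ^ q < v ^ q` with the same `q` and `v ^ q - u ^ q < u`, which is impossible.

To reach that situation for base `b` and sides `a`, let `p ∣ b` be prime with `e = v_p(b)`, and
keep infinitely many sides, all `≡ r [MOD p ^ (e + 2)]`. If `p ∤ r`, some partial sum is
`≡ p [MOD p ^ 2]`, of valuation exactly `1`, which no pure power has. Otherwise blocks of `p` sides
are `≡ p * r`, hence divisible by `p ^ (w + 1)`, where `w` is the valuation of `b` or, if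
`v_p(r) < e`, of `b` plus the first kept side.
-/

/-- A pure power is a positive integer of the form `a ^ n` with `a ≥ 1`, `n ≥ 2`. -/
def IsPurePower (m : ℕ) : Prop := ∃ a n : ℕ, 1 ≤ a ∧ 2 ≤ n ∧ m = a ^ n

open Finset Function

namespace IsPurePower

theorem exists_eq_pow_of_factorization_ne_zero {S : ℕ} (hS : IsPurePower S) {p : ℕ}
    (hp : S.factorization p ≠ 0) : ∃ q ∈ (S.factorization p).primeFactors, ∃ u, S = u ^ q := by
  obtain ⟨c, n, -, hn, rfl⟩ := hS
  have hdvd : n ∣ (c ^ n).factorization p := by simp [Nat.factorization_pow]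
  refine ⟨n.minFac, ?_, c ^ (n / n.minFac), ?_⟩
  · exact Nat.mem_primeFactors.mpr ⟨Nat.minFac_prime (by omega), (Nat.minFac_dvd n).trans hdvd, hp⟩
  · rw [← pow_mul, Nat.div_mul_cancel (Nat.minFac_dvd n)]

theorem factorization_ne_one {S : ℕ} (hS : IsPurePower S) (p : ℕ) : S.factorization p ≠ 1 := by
  intro h
  obtain ⟨q, hq, -⟩ := hS.exists_eq_pow_of_factorization_ne_zero (p := p) (by omega)
  simp [h] at hq

end IsPurePower

theorem pow_add_le_pow_of_pow_lt {u v q : ℕ} (hq : 2 ≤ q) (h : u ^ q < v ^ q) :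
    u ^ q + u ≤ v ^ q := by
  obtain ⟨m, rfl⟩ : ∃ m, q = m + 2 := ⟨q - 2, by omega⟩
  calc u ^ (m + 2) + u ≤ u ^ (m + 1) * (u + 1) := by
        rw [mul_add, mul_one, ← pow_succ]; gcongr; exact Nat.le_self_pow (by omega) u
    _ ≤ (u + 1) ^ (m + 1) * (u + 1) := by gcongr; omega
    _ = (u + 1) ^ (m + 2) := (pow_succ _ _).symm
    _ ≤ v ^ (m + 2) := Nat.pow_le_pow_left ((Nat.pow_lt_pow_iff_left (by omega)).mp h) _

theorem Nat.factorization_eq_of_modEq {p k S T : ℕ} (hp : p.Prime) (hT : T ≠ 0)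
    (hk : T.factorization p < k) (h : S ≡ T [MOD p ^ k]) :
    S.factorization p = T.factorization p := by
  have hdvd : p ^ T.factorization p ∣ S :=
    (h.dvd_iff (pow_dvd_pow p hk.le)).mpr (Nat.ordProj_dvd T p)
  have hndvd : ¬ p ^ (T.factorization p + 1) ∣ S :=
    mt (h.dvd_iff (pow_dvd_pow p hk)).mp (Nat.pow_succ_factorization_not_dvd hT hp)
  have hS : S ≠ 0 := by rintro rfl; exact hndvd (dvd_zero _)
  rw [hp.pow_dvd_iff_le_factorization hS] at hdvd hndvd
  omega

theorem exists_add_mul_modEq {r M : ℕ} (hM : M ≠ 0) (hr : r.Coprime M) (b c : ℕ) :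
    ∃ j, b + j * r ≡ c [MOD M] := by
  have : NeZero M := ⟨hM⟩
  refine ⟨(((c : ZMod M) - b) * (r : ZMod M)⁻¹).val, ?_⟩
  rw [← ZMod.natCast_eq_natCast_iff]
  push_cast
  rw [ZMod.natCast_zmod_val]
  linear_combination ((c : ZMod M) - b) * ZMod.coe_mul_inv_eq_one r hr

theorem exists_injective_modEq (a : ℕ → ℕ) {M : ℕ} (hM : M ≠ 0) :
    ∃ r, ∃ idx : ℕ → ℕ, Injective idx ∧ ∀ k, a (idx k) ≡ r [MOD M] := by
  have : NeZero M := ⟨hM⟩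
  obtain ⟨r, hr⟩ := Finite.exists_infinite_fiber fun i => (a i : ZMod M)
  set idx := (Set.infinite_coe_iff.mp hr).natEmbedding
  refine ⟨r.val, fun k => idx k, Subtype.val_injective.comp idx.injective, fun k => ?_⟩
  rw [← ZMod.natCast_eq_natCast_iff, ZMod.natCast_zmod_val]
  exact (idx k).2

theorem add_sum_add_sum_blocks_of_forall {P : ℕ → Prop} {b : ℕ} {a : ℕ → ℕ}
    (h : ∀ D : Finset ℕ, P (b + ∑ i ∈ D, a i)) {I : Finset ℕ} {blk : ℕ → Finset ℕ}
    (hblk : Pairwise (Disjoint on blk)) (hI : ∀ k, Disjoint I (blk k)) (K : Finset ℕ) :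
    P (b + ∑ i ∈ I, a i + ∑ k ∈ K, ∑ i ∈ blk k, a i) := by
  have := h (I ∪ K.biUnion blk)
  rwa [sum_union (disjoint_biUnion_right _ _ _ |>.mpr fun k _ => hI k),
    sum_biUnion (hblk.set_pairwise _), ← add_assoc] at this

theorem add_sum_add_sum_comp_of_forall {P : ℕ → Prop} {b : ℕ} {a : ℕ → ℕ}
    (h : ∀ D : Finset ℕ, P (b + ∑ i ∈ D, a i)) {I : Finset ℕ} {idx : ℕ → ℕ}
    (hidx : Injective idx) (hI : ∀ k, idx k ∉ I) (K : Finset ℕ) :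
    P (b + ∑ i ∈ I, a i + ∑ k ∈ K, a (idx k)) := by
  simpa using add_sum_add_sum_blocks_of_forall h (blk := fun k => {idx k})
    (fun k l hkl => disjoint_singleton.mpr (hidx.ne hkl))
    (fun k => disjoint_singleton_right.mpr (hI k)) K

theorem not_forall_exists_eq_pow {Q : Finset ℕ} (hQ : ∀ q ∈ Q, 2 ≤ q) (b : ℕ) {g : ℕ → ℕ}
    (hg : ∀ k, 0 < g k) : ¬ ∀ K : Finset ℕ, ∃ q ∈ Q, ∃ u, b + ∑ k ∈ K, g k = u ^ q := by
  intro h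
  choose q hqQ u hu using h
  set s : ℕ → ℕ := fun j => ∑ k ∈ range j, g k with hs
  have hs_lt : StrictMono s := strictMono_nat_of_lt_succ fun j => by
    simp only [hs, sum_range_succ]; linarith [hg j]
  set t := #Q
  -- the sides in `T` push every sum past `s t ^ q`, so that its `q`-th root exceeds `s t`
  set T := Ico t (t + (∑ q ∈ Q, s t ^ q + 1)) with hT_def
  have hT : ∑ q ∈ Q, s t ^ q < ∑ k ∈ T, g k := by
    have hcard : #T = ∑ q ∈ Q, s t ^ q + 1 := by simp [hT_def]
    have := card_nsmul_le_sum T (fun k => g k) 1 fun k _ => hg k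
    rw [hcard, smul_eq_mul, mul_one] at this
    omega
  have hK : ∀ j ≤ t, b + ∑ k ∈ range j ∪ T, g k = b + ∑ k ∈ T, g k + s j := fun j hj => by
    rw [sum_union (disjoint_left.mpr fun k hk hk' => by
      rw [mem_range] at hk; rw [hT_def, mem_Ico] at hk'; omega)]
    ring
  obtain ⟨c, hc, d, hd, hcd, hq⟩ := exists_ne_map_eq_of_card_lt_of_maps_to
    (s := range (t + 1)) (t := Q) (f := fun j => q (range j ∪ T)) (by simp [t])
    fun j _ => hqQ _
  rw [mem_range] at hc hd
  wlog hlt : c < d generalizing c d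
  · exact this d hd c hc hcd.symm hq.symm (by omega)
  obtain ⟨q₀, hq₀Q, huc, hud⟩ : ∃ q₀ ∈ Q, u (range c ∪ T) ^ q₀ = b + ∑ k ∈ T, g k + s c ∧
      u (range d ∪ T) ^ q₀ = b + ∑ k ∈ T, g k + s d :=
    ⟨_, hqQ _, by rw [← hK c (by omega), hu, hq], by rw [← hK d (by omega), hu, hq]⟩
  have hgap := pow_add_le_pow_of_pow_lt (v := u (range d ∪ T)) (hQ _ hq₀Q)
    (by rw [huc, hud]; gcongr; exact hs_lt hlt)
  have hsd : s d ≤ s t := hs_lt.monotone (by omega)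
  have : u (range c ∪ T) ^ q₀ ≤ s t ^ q₀ := by gcongr; omega
  have := single_le_sum (f := fun q => s t ^ q) (fun _ _ => Nat.zero_le _) hq₀Q
  omega

theorem not_forall_isPurePower_of_pow_dvd {p b : ℕ} (hp : p.Prime) (hb : b.factorization p ≠ 0)
    {g : ℕ → ℕ} (hg : ∀ k, 0 < g k) (hpg : ∀ k, p ^ (b.factorization p + 1) ∣ g k) :
    ¬ ∀ K : Finset ℕ, IsPurePower (b + ∑ k ∈ K, g k) := by
  intro h
  refine not_forall_exists_eq_pow (Q := (b.factorization p).primeFactors)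
    (fun q hq => (Nat.prime_of_mem_primeFactors hq).two_le) b hg fun K => ?_
  have hval : (b + ∑ k ∈ K, g k).factorization p = b.factorization p :=
    Nat.factorization_eq_of_modEq hp (by rintro rfl; simp at hb) (Nat.lt_succ_self _)
      (by simpa using (Nat.modEq_zero_iff_dvd.mpr (dvd_sum fun k _ => hpg k)).add_left b)
  have := (h K).exists_eq_pow_of_factorization_ne_zero (hval ▸ hb)
  rwa [hval] at this

theorem not_forall_isPurePower_of_modEq {p b r : ℕ} (hp : p.Prime) (hb : b.factorization p ≠ 0)
    (hr : p ^ b.factorization p ∣ r) {a : ℕ → ℕ} (ha : ∀ i, 0 < a i)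
    (har : ∀ i, a i ≡ r [MOD p ^ (b.factorization p + 1)]) :
    ¬ ∀ D : Finset ℕ, IsPurePower (b + ∑ i ∈ D, a i) := by
  intro h
  set blk : ℕ → Finset ℕ := fun k => Ico (k * p) ((k + 1) * p)
  have hblk : Pairwise (Disjoint on blk) := fun k l hkl => disjoint_left.mpr fun i hik hil => by
    simp only [blk, mem_Ico] at hik hil
    exact hkl ((Nat.div_eq_of_lt_le hik.1 hik.2).symm.trans (Nat.div_eq_of_lt_le hil.1 hil.2))
  have hcard : ∀ k, #(blk k) = p := fun k => by simp [blk, add_mul]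
  refine not_forall_isPurePower_of_pow_dvd hp hb (g := fun k => ∑ i ∈ blk k, a i)
    (fun k => sum_pos (fun i _ => ha i) (card_pos.mp (by rw [hcard]; exact hp.pos)))
    (fun k => ?_) fun K => by
      simpa using add_sum_add_sum_blocks_of_forall h hblk (I := ∅) (by simp) K
  have hsum : ∑ i ∈ blk k, a i ≡ p * r [MOD p ^ (b.factorization p + 1)] := by
    simpa [hcard] using Nat.ModEq.sum fun i (_ : i ∈ blk k) => har i
  exact (hsum.dvd_iff dvd_rfl).mpr (by rw [pow_succ']; exact mul_dvd_mul_left p hr)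

theorem not_forall_isPurePower_add_sum {b : ℕ} (hb : 2 ≤ b) {a : ℕ → ℕ} (ha : ∀ i, 0 < a i) :
    ¬ ∀ D : Finset ℕ, IsPurePower (b + ∑ i ∈ D, a i) := by
  intro h
  set p := b.minFac
  have hp : p.Prime := Nat.minFac_prime (by omega)
  set e := b.factorization p
  have he : e ≠ 0 := (hp.factorization_pos_of_dvd (by omega) (Nat.minFac_dvd b)).ne'
  obtain ⟨r, idx, hidx, hr⟩ := exists_injective_modEq a (pow_ne_zero (e + 2) hp.ne_zero)
  have hA : ∀ D : Finset ℕ, IsPurePower (b + ∑ k ∈ D, a (idx k)) := fun D => by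
    simpa using add_sum_add_sum_comp_of_forall h (I := ∅) hidx (by simp) D
  have hr_pow : ∀ m ≤ e + 2, ∀ k, a (idx k) ≡ r [MOD p ^ m] := fun m hm k =>
    (hr k).of_dvd (pow_dvd_pow p hm)
  by_cases hpr : p ∣ r
  · by_cases hper : p ^ e ∣ r
    · exact not_forall_isPurePower_of_modEq hp he hper (fun k => ha _) (hr_pow _ (by omega)) hA
    -- now `v_p(r) < e`, and moving the first side into the base lowers its valuation to `v_p(r)`
    have hr0 : r ≠ 0 := by rintro rfl; exact hper (dvd_zero _)
    have hfe : r.factorization p < e := by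
      by_contra! hef
      exact hper ((pow_dvd_pow p hef).trans (Nat.ordProj_dvd r p))
    have hval : (b + a (idx 0)).factorization p = r.factorization p := by
      refine Nat.factorization_eq_of_modEq hp hr0 hfe ?_
      simpa using (Nat.modEq_zero_iff_dvd.mpr (Nat.ordProj_dvd b p)).add (hr_pow e (by omega) 0)
    refine not_forall_isPurePower_of_modEq hp (r := r)
      (hval ▸ (hp.factorization_pos_of_dvd hr0 hpr).ne') (hval ▸ Nat.ordProj_dvd r p)
      (fun k => ha _) (fun k => by rw [hval]; exact hr_pow _ (by omega) (k + 1)) fun D => by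
        simpa using add_sum_add_sum_comp_of_forall hA (I := {0}) (add_left_injective 1) (by simp) D
  obtain ⟨j, hj⟩ := exists_add_mul_modEq (pow_ne_zero 2 hp.ne_zero)
    (Nat.Coprime.pow_right 2 (hp.coprime_iff_not_dvd.mpr hpr).symm) b p
  have hsum : b + ∑ k ∈ range j, a (idx k) ≡ p [MOD p ^ 2] :=
    ((Nat.ModEq.refl b).add (by
      simpa using Nat.ModEq.sum fun k (_ : k ∈ range j) => hr_pow 2 (by omega) k)).trans hj
  refine (hA (range j)).factorization_ne_one p ?_
  rw [Nat.factorization_eq_of_modEq hp hp.ne_zero (by simp [hp.factorization_self]) hsum,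
    hp.factorization_self]

/-- There is no infinite Hilbert cube in the set of pure powers. -/
theorem stmt_10 :
    ¬ ∃ (a₀ : ℕ) (a : ℕ → ℕ), (∀ i, 0 < a i) ∧
      ∀ F : Finset ℕ, F.Nonempty → IsPurePower (a₀ + ∑ i ∈ F, a i) := by
  rintro ⟨a₀, a, ha, h⟩
  refine not_forall_isPurePower_add_sum (b := a₀ + a 0 + a 1) (by linarith [ha 0, ha 1])
    (a := fun i => a (i + 2)) (fun i => ha _) fun D => ?_
  have := h (insert 0 (insert 1 (D.map (addRightEmbedding 2)))) (insert_nonempty _ _)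
  rwa [sum_insert (by simp), sum_insert (by simp), sum_map, ← add_assoc, ← add_assoc] at this
end

section
/- Assume the Schinzel–Tijdeman conjecture: for every polynomial P with rational coefficients having at least three simple roots (in an algebraic closure), the equation y² z³ = P(x) has only finitely many solutions in integers x, y, z with y z ≠ 0. Then the set W of powerful numbers contains no infinite Hilbert cube: there do not exist a non-negative integer a₀ and an infinite sequence a₁, a₂, a₃, … of positive integers such that a₀ + Σ_{i∈F} a_i is powerful for every finite nonempty set F of indices. -/
/-! From the cube one extracts three distinct shifts `b₁ < b₂ < b₃` (the base plus the first
one, two, three sides) and infinitely many `x` (partial sums of the remaining sides) with every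
`x + bⱼ` powerful. A product of powerful numbers is powerful, hence of the form `y² z³`, so each
such `x` solves `y² z³ = (x + b₁)(x + b₂)(x + b₃)`, whose right side has three simple roots. -/

open Polynomial Finset

def Powerful (n : ℕ) : Prop := 0 < n ∧ ∀ p : ℕ, p.Prime → p ∣ n → p ^ 2 ∣ n

theorem Powerful.mul {m n : ℕ} (hm : Powerful m) (hn : Powerful n) : Powerful (m * n) := by
  refine ⟨Nat.mul_pos hm.1 hn.1, fun p hp hdvd => ?_⟩
  rcases hp.dvd_mul.mp hdvd with h | h
  · exact (hm.2 p hp h).mul_right n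
  · exact (hn.2 p hp h).mul_left m

-- Write `n = b² a` with `a` squarefree; every prime of `a` must then divide `b`, so `a ∣ b`.
theorem Powerful.exists_eq_sq_mul_cube {n : ℕ} (hn : Powerful n) :
    ∃ y z : ℕ, 0 < y ∧ 0 < z ∧ n = y ^ 2 * z ^ 3 := by
  obtain ⟨a, b, rfl, ha⟩ := Nat.sq_mul_squarefree n
  have hb : b ≠ 0 := by rintro rfl; simp [Powerful] at hn
  have hab : a ∣ b := by
    rw [← Nat.prod_primeFactors_of_squarefree ha, Nat.prod_primeFactors_dvd_iff hb]
    intro p hpa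
    have hp := Nat.prime_of_mem_primeFactors hpa
    refine (Nat.mem_primeFactors_of_ne_zero hb).2 ⟨hp, ?_⟩
    by_contra hpb
    have hcop : Nat.Coprime (p ^ 2) (b ^ 2) :=
      .pow 2 2 ((Nat.Prime.coprime_iff_not_dvd hp).2 hpb)
    have hp2a : p * p ∣ a := by
      rw [← sq]
      exact hcop.dvd_of_dvd_mul_left
        (hn.2 p hp (dvd_mul_of_dvd_right (Nat.dvd_of_mem_primeFactors hpa) _))
    exact hp.one_lt.ne' (Nat.isUnit_iff.1 (ha p hp2a))
  obtain ⟨c, rfl⟩ := hab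
  refine ⟨c, a, Nat.pos_of_ne_zero (right_ne_zero_of_mul hb),
    Nat.pos_of_ne_zero (left_ne_zero_of_mul hb), by ring⟩

theorem rootMultiplicity_multiset_prod_X_sub_C_of_nodup {R : Type*} [CommRing R] [IsDomain R]
    {s : Multiset R} (hs : s.Nodup) {r : R} (hr : r ∈ s) :
    rootMultiplicity r (s.map fun a => X - C a).prod = 1 := by
  classical
  rw [← count_roots, roots_multiset_prod_X_sub_C, Multiset.count_eq_one_of_mem hs hr]

def HasThreeSimpleRoots {K : Type*} [Field K] (P : K[X]) : Prop :=
  ∃ r₁ r₂ r₃ : AlgebraicClosure K, r₁ ≠ r₂ ∧ r₁ ≠ r₃ ∧ r₂ ≠ r₃ ∧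
    (P.map (algebraMap K (AlgebraicClosure K))).rootMultiplicity r₁ = 1 ∧
    (P.map (algebraMap K (AlgebraicClosure K))).rootMultiplicity r₂ = 1 ∧
    (P.map (algebraMap K (AlgebraicClosure K))).rootMultiplicity r₃ = 1

theorem hasThreeSimpleRoots_prod_X_sub_C {K : Type*} [Field K] {u v w : K}
    (huv : u ≠ v) (huw : u ≠ w) (hvw : v ≠ w) :
    HasThreeSimpleRoots (({u, v, w} : Multiset K).map fun r => X - C r).prod := by
  set f := algebraMap K (AlgebraicClosure K)
  have hmap : ((({u, v, w} : Multiset K).map fun r => X - C r).prod).map f =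
      (({f u, f v, f w} : Multiset _).map fun r => X - C r).prod := by simp
  have hnodup : ({f u, f v, f w} : Multiset (AlgebraicClosure K)).Nodup := by
    simp [f.injective.ne huv, f.injective.ne huw, f.injective.ne hvw]
  refine ⟨f u, f v, f w, f.injective.ne huv, f.injective.ne huw, f.injective.ne hvw, ?_⟩
  rw [hmap]
  refine ⟨?_, ?_, ?_⟩ <;> exact rootMultiplicity_multiset_prod_X_sub_C_of_nodup hnodup (by simp)

def SchinzelTijdeman : Prop :=
  ∀ P : Polynomial ℚ, HasThreeSimpleRoots P →
    {s : ℤ × ℤ × ℤ | s.2.1 * s.2.2 ≠ 0 ∧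
      ((s.2.1 : ℚ)) ^ 2 * ((s.2.2 : ℚ)) ^ 3 = P.eval ((s.1 : ℤ) : ℚ)}.Finite

theorem finite_setOf_powerful_add_of_schinzelTijdeman (ST : SchinzelTijdeman) {b₁ b₂ b₃ : ℕ}
    (h₁₂ : b₁ ≠ b₂) (h₁₃ : b₁ ≠ b₃) (h₂₃ : b₂ ≠ b₃) :
    {x : ℕ | Powerful (x + b₁) ∧ Powerful (x + b₂) ∧ Powerful (x + b₃)}.Finite := by
  have hsol := ST _ (hasThreeSimpleRoots_prod_X_sub_C (u := -(b₁ : ℚ)) (v := -b₂) (w := -b₃)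
    (by simpa using h₁₂) (by simpa using h₁₃) (by simpa using h₂₃))
  refine ((hsol.image Prod.fst).preimage Nat.cast_injective.injOn).subset ?_
  rintro x ⟨h₁, h₂, h₃⟩
  obtain ⟨y, z, hy, hz, hyz⟩ := (h₁.mul h₂ |>.mul h₃).exists_eq_sq_mul_cube
  refine ⟨(x, y, z), ⟨by positivity, ?_⟩, rfl⟩
  simp only [Multiset.insert_eq_cons, Multiset.map_cons, Multiset.map_singleton,
    Multiset.prod_cons, Multiset.prod_singleton, eval_mul, eval_sub, eval_X, eval_C, sub_neg_eq_add]
  rw [mul_assoc] at hyz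
  exact_mod_cast hyz.symm

theorem powerful_add_sum_Ico_of_hilbertCube {a₀ : ℕ} {a : ℕ → ℕ}
    (hcube : ∀ F : Finset ℕ, F.Nonempty → Powerful (a₀ + ∑ i ∈ F, a i))
    {j m : ℕ} (hj : 0 < j) (hjm : j ≤ m) (n : ℕ) :
    Powerful (∑ i ∈ Ico m n, a i + (a₀ + ∑ i ∈ range j, a i)) := by
  have hdisj : Disjoint (range j) (Ico m n) := by
    rw [disjoint_left]; intro i; simp only [mem_range, mem_Ico]; omega
  have := hcube (range j ∪ Ico m n) ⟨0, by simp [hj]⟩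
  rwa [sum_union hdisj, ← add_assoc, add_comm] at this

theorem strictMono_sum_Ico_of_pos {a : ℕ → ℕ} (ha : ∀ i, 0 < a i) (m : ℕ) :
    StrictMono fun k => ∑ i ∈ Ico m (m + k), a i :=
  strictMono_nat_of_lt_succ fun k => by
    rw [← add_assoc, sum_Ico_succ_top (by omega)]
    exact Nat.lt_add_of_pos_right (ha _)

/-- Assuming the Schinzel–Tijdeman conjecture, there is no infinite Hilbert
cube in the set of powerful numbers. -/
theorem stmt_12
    (ST : ∀ P : Polynomial ℚ,
      (∃ r₁ r₂ r₃ : AlgebraicClosure ℚ, r₁ ≠ r₂ ∧ r₁ ≠ r₃ ∧ r₂ ≠ r₃ ∧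
        (P.map (algebraMap ℚ (AlgebraicClosure ℚ))).rootMultiplicity r₁ = 1 ∧
        (P.map (algebraMap ℚ (AlgebraicClosure ℚ))).rootMultiplicity r₂ = 1 ∧
        (P.map (algebraMap ℚ (AlgebraicClosure ℚ))).rootMultiplicity r₃ = 1) →
      {s : ℤ × ℤ × ℤ | s.2.1 * s.2.2 ≠ 0 ∧
        ((s.2.1 : ℚ)) ^ 2 * ((s.2.2 : ℚ)) ^ 3 = P.eval ((s.1 : ℤ) : ℚ)}.Finite) :
    ¬ ∃ (a₀ : ℕ) (a : ℕ → ℕ), (∀ i, 0 < a i) ∧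
      ∀ F : Finset ℕ, F.Nonempty → Powerful (a₀ + ∑ i ∈ F, a i) := by
  rintro ⟨a₀, a, ha, hcube⟩
  set b : ℕ → ℕ := fun j => a₀ + ∑ i ∈ range j, a i
  have hb : b 1 < b 2 ∧ b 2 < b 3 := by
    simp only [b, sum_range_succ, sum_range_zero]
    have := ha 1; have := ha 2; omega
  have hfin :=
    finite_setOf_powerful_add_of_schinzelTijdeman ST hb.1.ne (hb.1.trans hb.2).ne hb.2.ne
  refine hfin.not_infinite (Set.infinite_of_injective_forall_mem
    (strictMono_sum_Ico_of_pos ha 3).injective fun k => ?_)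
  exact ⟨powerful_add_sum_Ico_of_hilbertCube hcube (by norm_num) (by norm_num) _,
    powerful_add_sum_Ico_of_hilbertCube hcube (by norm_num) (by norm_num) _,
    powerful_add_sum_Ico_of_hilbertCube hcube (by norm_num) (by norm_num) _⟩
end

section
/- Let v ≥ 3 and N be positive integers, and let S be a set of positive integers containing no homogeneous arithmetic progression of length v, i.e., there is no positive integer t with t, 2t, …, vt all in S. Let A = {a₁, …, a_d} ⊆ [1, N] be a set of d distinct positive integers such that every nonempty subset sum Σ_{i∈F} a_i (F a nonempty subset of {1,…,d}) lies in S ∩ [1, N]. Then for every positive integer h and every integer n, the number of h-element subsets of A whose elements sum to n is at most h! · (v−1)^{h−1}. -/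
/-!
Let `𝓕` be the family of `h`-subsets of `A` with sum `n`, and take a maximal pairwise disjoint
subfamily `𝒟 ⊆ 𝓕`. Unions of `j` members of `𝒟` have sum `j n` and are subsets of `A`, so their
sums lie in `S`; as `S` contains no progression `n, 2n, …, vn`, `𝒟` has at most `v - 1` members.
By maximality every member of `𝓕` meets the union `U` of `𝒟`, which has at most `(v - 1) h`
elements, and removing `x ∈ U` maps the members of `𝓕` containing `x` injectively to
`(h - 1)`-subsets of `A` with sum `n - x`. Induction on `h` gives `h! (v - 1)^(h - 1)`.
-/

open Finset

namespace Finset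

variable {α : Type*} [DecidableEq α]

theorem exists_pairwiseDisjoint_subset_forall_exists_mem_biUnion (𝓕 : Finset (Finset α)) :
    ∃ 𝒟 ⊆ 𝓕, (𝒟 : Set (Finset α)).PairwiseDisjoint id ∧
      ∀ F ∈ 𝓕, F.Nonempty → ∃ x ∈ 𝒟.biUnion id, x ∈ F := by
  classical
  obtain ⟨𝒟, h𝒟, h𝒟max⟩ := exists_max_image
    (𝓕.powerset.filter fun 𝒟 : Finset (Finset α) => (𝒟 : Set (Finset α)).PairwiseDisjoint id)
    card
    ⟨∅, by simp⟩
  simp only [mem_filter, mem_powerset] at h𝒟 h𝒟max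
  refine ⟨𝒟, h𝒟.1, h𝒟.2, fun F hF ⟨y, hy⟩ => ?_⟩
  by_contra! hmiss
  have hdisj : ∀ D ∈ 𝒟, Disjoint F D := fun D hD =>
    disjoint_left.2 fun x hxF hxD => hmiss x (mem_biUnion.2 ⟨D, hD, hxD⟩) hxF
  have hF𝒟 : F ∉ 𝒟 := fun hF𝒟 => hmiss y (mem_biUnion.2 ⟨F, hF𝒟, hy⟩) hy
  have := h𝒟max (insert F 𝒟) ⟨insert_subset hF h𝒟.1, by
    rw [coe_insert]; exact h𝒟.2.insert fun D hD _ => hdisj D hD⟩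
  rw [card_insert_of_notMem hF𝒟] at this
  omega

theorem card_le_card_mul_of_forall_exists_mem {𝓕 : Finset (Finset α)} {U : Finset α} {B : ℕ}
    (hU : ∀ F ∈ 𝓕, ∃ x ∈ U, x ∈ F) (hB : ∀ x ∈ U, #{F ∈ 𝓕 | x ∈ F} ≤ B) :
    #𝓕 ≤ #U * B :=
  calc #𝓕 ≤ #(U.biUnion fun x => {F ∈ 𝓕 | x ∈ F}) := card_le_card fun F hF => by
        obtain ⟨x, hxU, hxF⟩ := hU F hF
        exact mem_biUnion.2 ⟨x, hxU, mem_filter.2 ⟨hF, hxF⟩⟩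
    _ ≤ #U * B := card_biUnion_le_card_mul _ _ _ hB

theorem exists_subset_sum_eq_nsmul {M : Type*} [AddCommMonoid M] {f : α → M} {A : Finset α}
    {𝒟 : Finset (Finset α)} {n : M} (h𝒟 : ∀ D ∈ 𝒟, D ⊆ A ∧ ∑ x ∈ D, f x = n)
    (hdisj : (𝒟 : Set (Finset α)).PairwiseDisjoint id) {j : ℕ} (hj : j ≤ #𝒟) :
    ∃ F ⊆ A, ∑ x ∈ F, f x = j • n := by
  obtain ⟨T, hT𝒟, hTcard⟩ := exists_subset_card_eq hj
  refine ⟨T.biUnion id, biUnion_subset.2 fun D hD => (h𝒟 D (hT𝒟 hD)).1, ?_⟩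
  rw [sum_biUnion (hdisj.subset (coe_subset.2 hT𝒟)), ← hTcard, ← sum_const]
  exact sum_congr rfl fun D hD => (h𝒟 D (hT𝒟 hD)).2

end Finset

def sumSubsets (A : Finset ℕ) (h n : ℕ) : Finset (Finset ℕ) :=
  A.powerset.filter fun F => F.card = h ∧ F.sum id = n

@[simp]
theorem mem_sumSubsets {A F : Finset ℕ} {h n : ℕ} :
    F ∈ sumSubsets A h n ↔ F ⊆ A ∧ #F = h ∧ ∑ x ∈ F, x = n := by
  simp [sumSubsets]

theorem card_sumSubsets_one_le (A : Finset ℕ) (n : ℕ) : #(sumSubsets A 1 n) ≤ 1 :=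
  card_le_one.2 fun F hF G hG => by
    simp only [mem_sumSubsets, card_eq_one] at hF hG
    obtain ⟨-, ⟨x, rfl⟩, hx⟩ := hF
    obtain ⟨-, ⟨y, rfl⟩, hy⟩ := hG
    simp_all

theorem card_filter_mem_sumSubsets_succ_le (A : Finset ℕ) (k n x : ℕ) :
    #{F ∈ sumSubsets A (k + 1) n | x ∈ F} ≤ #(sumSubsets A k (n - x)) := by
  refine card_le_card_of_injOn (fun F => F.erase x) (fun F hF => ?_) fun F hF G hG hFG => ?_
  · simp only [coe_filter, Set.mem_ofPred_eq, mem_coe, mem_sumSubsets] at hF ⊢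
    obtain ⟨⟨hFA, hFcard, hFsum⟩, hxF⟩ := hF
    refine ⟨(erase_subset x F).trans hFA, by rw [card_erase_of_mem hxF, hFcard]; rfl, ?_⟩
    rw [← hFsum, ← add_sum_erase F (fun y => y) hxF, Nat.add_sub_cancel_left]
  · simp only [coe_filter, Set.mem_ofPred_eq] at hF hG
    rw [← insert_erase hF.2, ← insert_erase hG.2]
    exact congrArg (insert x) hFG

theorem card_le_of_pairwiseDisjoint_sum_eq {v n : ℕ} {S : Set ℕ} {A : Finset ℕ}
    (hSpos : ∀ s ∈ S, 0 < s) (hS : ¬ ∃ t : ℕ, 0 < t ∧ ∀ j : ℕ, 1 ≤ j → j ≤ v → j * t ∈ S)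
    (hsum : ∀ F ⊆ A, F.Nonempty → ∑ x ∈ F, x ∈ S) {𝒟 : Finset (Finset ℕ)}
    (h𝒟 : ∀ D ∈ 𝒟, D ⊆ A ∧ D.Nonempty ∧ ∑ x ∈ D, x = n)
    (hdisj : (𝒟 : Set (Finset ℕ)).PairwiseDisjoint id) :
    #𝒟 ≤ v - 1 := by
  by_contra! hlt
  obtain ⟨D, hD⟩ : 𝒟.Nonempty := card_pos.1 (by omega)
  obtain ⟨hDA, hDne, hDsum⟩ := h𝒟 D hD
  have hn : 0 < n := hDsum ▸ hSpos _ (hsum D hDA hDne)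
  refine hS ⟨n, hn, fun j hj hjv => ?_⟩
  obtain ⟨F, hFA, hFsum⟩ := exists_subset_sum_eq_nsmul (f := fun x => x)
    (fun D hD => ⟨(h𝒟 D hD).1, (h𝒟 D hD).2.2⟩) hdisj (j := j) (by omega)
  rw [smul_eq_mul] at hFsum
  have hFne : F.Nonempty := nonempty_of_sum_ne_zero (by rw [hFsum]; positivity)
  exact hFsum ▸ hsum F hFA hFne

theorem card_sumSubsets_succ_le {v : ℕ} {S : Set ℕ} {A : Finset ℕ} (hSpos : ∀ s ∈ S, 0 < s)
    (hS : ¬ ∃ t : ℕ, 0 < t ∧ ∀ j : ℕ, 1 ≤ j → j ≤ v → j * t ∈ S)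
    (hsum : ∀ F ⊆ A, F.Nonempty → ∑ x ∈ F, x ∈ S) {k B : ℕ}
    (hB : ∀ m, #(sumSubsets A k m) ≤ B) (n : ℕ) :
    #(sumSubsets A (k + 1) n) ≤ (v - 1) * (k + 1) * B := by
  obtain ⟨𝒟, h𝒟𝓕, hdisj, hmeet⟩ :=
    exists_pairwiseDisjoint_subset_forall_exists_mem_biUnion (sumSubsets A (k + 1) n)
  have hne (F) (hF : F ∈ sumSubsets A (k + 1) n) : F.Nonempty :=
    card_pos.1 (by rw [(mem_sumSubsets.1 hF).2.1]; omega)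
  have h𝒟card : #𝒟 ≤ v - 1 := card_le_of_pairwiseDisjoint_sum_eq hSpos hS hsum
    (fun D hD => ⟨(mem_sumSubsets.1 (h𝒟𝓕 hD)).1, hne D (h𝒟𝓕 hD), (mem_sumSubsets.1 (h𝒟𝓕 hD)).2.2⟩)
    hdisj
  have hU : #(𝒟.biUnion id) ≤ (v - 1) * (k + 1) :=
    (card_biUnion_le_card_mul _ _ _ fun D hD => (mem_sumSubsets.1 (h𝒟𝓕 hD)).2.1.le).trans
      (Nat.mul_le_mul_right _ h𝒟card)
  calc #(sumSubsets A (k + 1) n) ≤ #(𝒟.biUnion id) * B :=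
        card_le_card_mul_of_forall_exists_mem (fun F hF => hmeet F hF (hne F hF))
          fun x _ => (card_filter_mem_sumSubsets_succ_le A k n x).trans (hB _)
    _ ≤ (v - 1) * (k + 1) * B := Nat.mul_le_mul_right _ hU

theorem stmt_13_general (v N : ℕ) (S : Set ℕ)
    (hSpos : ∀ s ∈ S, 0 < s)
    (hS : ¬ ∃ t : ℕ, 0 < t ∧ ∀ j : ℕ, 1 ≤ j → j ≤ v → j * t ∈ S)
    (A : Finset ℕ)
    (hsum : ∀ F ⊆ A, F.Nonempty → F.sum id ∈ S ∧ F.sum id ≤ N) :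
    ∀ h : ℕ, 0 < h → ∀ n : ℕ,
      (A.powerset.filter (fun F => F.card = h ∧ F.sum id = n)).card
        ≤ h.factorial * (v - 1) ^ (h - 1) := by
  intro h hh
  induction h, hh using Nat.le_induction with
  | base => exact fun n => (card_sumSubsets_one_le A n).trans (by simp)
  | succ k hk ih =>
    intro n
    calc #(sumSubsets A (k + 1) n) ≤ (v - 1) * (k + 1) * (k.factorial * (v - 1) ^ (k - 1)) :=
          card_sumSubsets_succ_le hSpos hS (fun F hF hne => (hsum F hF hne).1) ih n
      _ = (k + 1).factorial * (v - 1) ^ (k + 1 - 1) := by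
          obtain ⟨k, rfl⟩ := Nat.exists_eq_add_of_le' hk
          simp only [Nat.factorial_succ, Nat.add_sub_cancel, pow_succ]
          ring

/-- A cube lemma for sets without homogeneous arithmetic progressions:
the number of `h`-element subsets of `A` summing to `n` is at most
`h! (v-1)^(h-1)`. -/
theorem stmt_13 (v N : ℕ) (hv : 3 ≤ v) (hN : 0 < N) (S : Set ℕ)
    (hSpos : ∀ s ∈ S, 0 < s)
    (hS : ¬ ∃ t : ℕ, 0 < t ∧ ∀ j : ℕ, 1 ≤ j → j ≤ v → j * t ∈ S)
    (A : Finset ℕ) (hA : ∀ x ∈ A, 1 ≤ x ∧ x ≤ N)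
    (hsum : ∀ F ⊆ A, F.Nonempty → F.sum id ∈ S ∧ F.sum id ≤ N) :
    ∀ h : ℕ, 0 < h → ∀ n : ℕ,
      (A.powerset.filter (fun F => F.card = h ∧ F.sum id = n)).card
        ≤ h.factorial * (v - 1) ^ (h - 1) :=
  stmt_13_general v N S hSpos hS A hsum
end

section
/- Let S be a set of positive integers, N and h positive integers, and let A = {a₁, …, a_d} be a set of d distinct positive integers such that every nonempty subset sum Σ_{i∈F} a_i lies in S ∩ [1, N]. Suppose F is a real number such that whenever B₁, …, B₅ are nonempty finite sets of positive integers with Bᵢ + Bⱼ ⊆ S ∩ [1, N] for all distinct i, j ∈ {1,…,5}, then min_{1≤i≤5} |Bᵢ| ≤ F; and suppose G is a real number such that for every integer n ≤ N, the number of h-element subsets of A summing to n is at most G. If d ≥ 5h + 4, then d ≤ 5 (h! · F · G)^{1/h} + 5h + 4. -/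
lemma exists_five_disjoint (s : Finset ℕ) (k : ℕ) (hk : 5 * k ≤ s.card) :
    ∃ f : Fin 5 → Finset ℕ, (∀ i, f i ⊆ s) ∧ (∀ i, (f i).card = k) ∧
      ∀ i j, i ≠ j → Disjoint (f i) (f j) := by
  obtain ⟨A1, hA1s, hA1c⟩ := Finset.exists_subset_card_eq (show k ≤ s.card by omega)
  have hc1 : (s \ A1).card = s.card - k := by rw [Finset.card_sdiff_of_subset hA1s, hA1c]
  obtain ⟨A2, hA2s, hA2c⟩ := Finset.exists_subset_card_eq (show k ≤ (s \ A1).card by omega)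
  have hc2 : ((s \ A1) \ A2).card = s.card - k - k := by
    rw [Finset.card_sdiff_of_subset hA2s, hc1, hA2c]
  obtain ⟨A3, hA3s, hA3c⟩ :=
    Finset.exists_subset_card_eq (show k ≤ ((s \ A1) \ A2).card by omega)
  have hc3 : (((s \ A1) \ A2) \ A3).card = s.card - k - k - k := by
    rw [Finset.card_sdiff_of_subset hA3s, hc2, hA3c]
  obtain ⟨A4, hA4s, hA4c⟩ :=
    Finset.exists_subset_card_eq (show k ≤ (((s \ A1) \ A2) \ A3).card by omega)
  have hc4 : ((((s \ A1) \ A2) \ A3) \ A4).card = s.card - k - k - k - k := by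
    rw [Finset.card_sdiff_of_subset hA4s, hc3, hA4c]
  obtain ⟨A5, hA5s, hA5c⟩ :=
    Finset.exists_subset_card_eq (show k ≤ ((((s \ A1) \ A2) \ A3) \ A4).card by omega)
  have hs2 : A2 ⊆ s \ A1 := hA2s
  have hs3a : A3 ⊆ (s \ A1) \ A2 := hA3s
  have hs4a : A4 ⊆ ((s \ A1) \ A2) \ A3 := hA4s
  have hs5a : A5 ⊆ (((s \ A1) \ A2) \ A3) \ A4 := hA5s
  have hs3 : A3 ⊆ s \ A1 := hs3a.trans Finset.sdiff_subset
  have hs4 : A4 ⊆ s \ A1 := (hs4a.trans Finset.sdiff_subset).trans Finset.sdiff_subset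
  have hs5 : A5 ⊆ s \ A1 :=
    ((hs5a.trans Finset.sdiff_subset).trans Finset.sdiff_subset).trans Finset.sdiff_subset
  have hs4b : A4 ⊆ (s \ A1) \ A2 := hs4a.trans Finset.sdiff_subset
  have hs5b : A5 ⊆ (s \ A1) \ A2 :=
    (hs5a.trans Finset.sdiff_subset).trans Finset.sdiff_subset
  have hs5c : A5 ⊆ ((s \ A1) \ A2) \ A3 := hs5a.trans Finset.sdiff_subset
  have d21 : Disjoint A2 A1 := Finset.sdiff_disjoint.mono_left hs2
  have d31 : Disjoint A3 A1 := Finset.sdiff_disjoint.mono_left hs3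
  have d41 : Disjoint A4 A1 := Finset.sdiff_disjoint.mono_left hs4
  have d51 : Disjoint A5 A1 := Finset.sdiff_disjoint.mono_left hs5
  have d32 : Disjoint A3 A2 := Finset.sdiff_disjoint.mono_left hs3a
  have d42 : Disjoint A4 A2 := Finset.sdiff_disjoint.mono_left hs4b
  have d52 : Disjoint A5 A2 := Finset.sdiff_disjoint.mono_left hs5b
  have d43 : Disjoint A4 A3 := Finset.sdiff_disjoint.mono_left hs4a
  have d53 : Disjoint A5 A3 := Finset.sdiff_disjoint.mono_left hs5c
  have d54 : Disjoint A5 A4 := Finset.sdiff_disjoint.mono_left hs5a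
  have h1s : A1 ⊆ s := hA1s
  have h2s : A2 ⊆ s := hs2.trans Finset.sdiff_subset
  have h3s : A3 ⊆ s := hs3.trans Finset.sdiff_subset
  have h4s : A4 ⊆ s := hs4.trans Finset.sdiff_subset
  have h5s : A5 ⊆ s := hs5.trans Finset.sdiff_subset
  refine ⟨![A1, A2, A3, A4, A5], ?_, ?_, ?_⟩
  · intro i
    fin_cases i
    · exact h1s
    · exact h2s
    · exact h3s
    · exact h4s
    · exact h5s
  · intro i
    fin_cases i
    · exact hA1c
    · exact hA2c
    · exact hA3c
    · exact hA4c
    · exact hA5c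
  · intro i j hij
    fin_cases i <;> fin_cases j <;>
      first
        | exact absurd rfl hij
        | exact d21 | exact d31 | exact d41 | exact d51
        | exact d32 | exact d42 | exact d52
        | exact d43 | exact d53 | exact d54
        | exact d21.symm | exact d31.symm | exact d41.symm | exact d51.symm
        | exact d32.symm | exact d42.symm | exact d52.symm
        | exact d43.symm | exact d53.symm | exact d54.symm

/-- If all nonempty subset sums of a set `A` of distinct positive integers lie
in `S ∩ [1, N]`, `F` bounds the minimum cardinality in the five-sets sumset
condition, `G` bounds the number of `h`-subsets of `A` with a given sum, and
`|A| ≥ 5h + 4`, then `|A| ≤ 5 (h! F G)^(1/h) + 5h + 4`. -/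
theorem stmt_14 (S : Set ℕ) (N h : ℕ) (hN : 0 < N) (hh : 0 < h)
    (A : Finset ℕ) (hApos : ∀ x ∈ A, 0 < x)
    (hsum : ∀ B ⊆ A, B.Nonempty → B.sum id ∈ S ∧ 1 ≤ B.sum id ∧ B.sum id ≤ N)
    (F G : ℝ)
    (hF : ∀ B : Fin 5 → Finset ℕ,
      (∀ i, (B i).Nonempty) → (∀ i, ∀ x ∈ B i, 0 < x) →
      (∀ i j, i ≠ j → ∀ x ∈ B i, ∀ y ∈ B j, x + y ∈ S ∧ 1 ≤ x + y ∧ x + y ≤ N) →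
      ∃ i, ((B i).card : ℝ) ≤ F)
    (hG : ∀ n : ℕ, n ≤ N →
      ((A.powerset.filter (fun B => B.card = h ∧ B.sum id = n)).card : ℝ) ≤ G)
    (hd : 5 * h + 4 ≤ A.card) :
    (A.card : ℝ) ≤ 5 * ((h.factorial : ℝ) * F * G) ^ ((1 : ℝ) / h)
      + 5 * h + 4 := by
  set d := A.card with hdcard
  set k := d / 5 with hkdef
  have hk5 : 5 * k ≤ d := by omega
  have hdk : d ≤ 5 * k + 4 := by omega
  have hhk : h ≤ k := by omega
  obtain ⟨f, hfsub, hfcard, hfdisj⟩ := exists_five_disjoint A k hk5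
  classical
  set P : Fin 5 → Finset (Finset ℕ) :=
    fun i => (f i).powerset.filter (fun t => t.card = h) with hP
  have hPmem : ∀ i t, t ∈ P i ↔ t ⊆ f i ∧ t.card = h := by
    intro i t; simp [hP]
  have hPsub : ∀ i, ∀ t ∈ P i, t ⊆ A := by
    intro i t ht
    exact ((hPmem i t).1 ht).1.trans (hfsub i)
  have hPne : ∀ i, ∀ t ∈ P i, t.Nonempty := by
    intro i t ht
    have := ((hPmem i t).1 ht).2
    rw [← Finset.card_pos, this]; exact hh
  set B : Fin 5 → Finset ℕ := fun i => (P i).image (fun t => t.sum id) with hB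
  have hBne : ∀ i, (B i).Nonempty := by
    intro i
    obtain ⟨t, hts, htc⟩ := Finset.exists_subset_card_eq (show h ≤ (f i).card by rw [hfcard]; exact hhk)
    exact ⟨t.sum id, Finset.mem_image_of_mem _ ((hPmem i t).2 ⟨hts, htc⟩)⟩
  have hBpos : ∀ i, ∀ x ∈ B i, 0 < x := by
    intro i x hx
    obtain ⟨t, ht, rfl⟩ := Finset.mem_image.1 hx
    exact (hsum t (hPsub i t ht) (hPne i t ht)).2.1
  have hBpair : ∀ i j, i ≠ j → ∀ x ∈ B i, ∀ y ∈ B j, x + y ∈ S ∧ 1 ≤ x + y ∧ x + y ≤ N := by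
    intro i j hij x hx y hy
    obtain ⟨t, ht, rfl⟩ := Finset.mem_image.1 hx
    obtain ⟨u, hu, rfl⟩ := Finset.mem_image.1 hy
    have hdisj : Disjoint t u :=
      (hfdisj i j hij).mono ((hPmem i t).1 ht).1 ((hPmem j u).1 hu).1
    have hsum_eq : t.sum id + u.sum id = (t ∪ u).sum id :=
      (Finset.sum_union hdisj).symm
    have hsubA : t ∪ u ⊆ A := Finset.union_subset (hPsub i t ht) (hPsub j u hu)
    have hne : (t ∪ u).Nonempty := (hPne i t ht).mono Finset.subset_union_left
    rw [hsum_eq]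
    exact hsum _ hsubA hne
  obtain ⟨i, hFi⟩ := hF B hBne hBpos hBpair
  have hG0 : 0 ≤ G := le_trans (Nat.cast_nonneg _) (hG N le_rfl)
  have hPcard : (P i).card = k.choose h := by
    have heq : (f i).powersetCard h = P i := Finset.powersetCard_eq_filter
    rw [← heq, Finset.card_powersetCard, hfcard]
  -- fiberwise counting
  have hfiber : ∀ n ∈ B i, (((P i).filter (fun t => t.sum id = n)).card : ℝ) ≤ G := by
    intro n hn
    obtain ⟨t, ht, rfl⟩ := Finset.mem_image.1 hn
    have hnN : t.sum id ≤ N := (hsum t (hPsub i t ht) (hPne i t ht)).2.2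
    refine le_trans ?_ (hG _ hnN)
    have hsub : (P i).filter (fun u => u.sum id = t.sum id) ⊆
        A.powerset.filter (fun u => u.card = h ∧ u.sum id = t.sum id) := by
      intro u hu
      rw [Finset.mem_filter] at hu ⊢
      exact ⟨Finset.mem_powerset.2 (hPsub i u hu.1), ((hPmem i u).1 hu.1).2, hu.2⟩
    exact_mod_cast Nat.cast_le.2 (Finset.card_le_card hsub)
  have hcount : ((k.choose h : ℕ) : ℝ) ≤ F * G := by
    have heq : (P i).card = ∑ n ∈ B i, ((P i).filter (fun t => t.sum id = n)).card :=
      Finset.card_eq_sum_card_image (fun t => t.sum id) (P i)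
    have : ((P i).card : ℝ) ≤ ∑ n ∈ B i, G := by
      rw [heq]; push_cast
      exact Finset.sum_le_sum hfiber
    rw [Finset.sum_const, nsmul_eq_mul] at this
    rw [← hPcard]
    calc ((P i).card : ℝ) ≤ (B i).card * G := this
      _ ≤ F * G := mul_le_mul_of_nonneg_right hFi hG0
  -- (k + 1 - h)^h ≤ h! * F * G
  have hpow : (((k + 1 - h : ℕ)) ^ h : ℝ) ≤ (h.factorial : ℝ) * F * G := by
    have h1 : (((k + 1 - h : ℕ)) ^ h : ℝ) / (h.factorial : ℝ) ≤ (k.choose h : ℝ) :=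
      Nat.pow_le_choose h k
    have hfac : (0 : ℝ) < (h.factorial : ℝ) := by positivity
    have := h1.trans hcount
    rw [div_le_iff₀ hfac] at this
    calc (((k + 1 - h : ℕ)) ^ h : ℝ) ≤ F * G * (h.factorial : ℝ) := this
      _ = (h.factorial : ℝ) * F * G := by ring
  set y : ℝ := (h.factorial : ℝ) * F * G with hy
  have hy0 : 0 ≤ y := le_trans (by positivity) hpow
  have hx0 : (0 : ℝ) ≤ ((k + 1 - h : ℕ) : ℝ) := Nat.cast_nonneg _
  have hxh : ((k + 1 - h : ℕ) : ℝ) ≤ y ^ ((1 : ℝ) / h) := by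
    have hhne : (h : ℝ) ≠ 0 := Nat.cast_ne_zero.2 hh.ne'
    have h2 : (((k + 1 - h : ℕ) : ℝ) ^ h) ^ ((1 : ℝ) / h) ≤ y ^ ((1 : ℝ) / h) :=
      Real.rpow_le_rpow (by positivity) hpow (by positivity)
    calc ((k + 1 - h : ℕ) : ℝ) = (((k + 1 - h : ℕ) : ℝ) ^ h) ^ ((1 : ℝ) / h) := by
          rw [← Real.rpow_natCast ((k + 1 - h : ℕ) : ℝ) h, ← Real.rpow_mul hx0,
            mul_one_div, div_self hhne, Real.rpow_one]
      _ ≤ y ^ ((1 : ℝ) / h) := h2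
  have hcast : ((k + 1 - h : ℕ) : ℝ) = (k : ℝ) + 1 - (h : ℝ) := by
    have : h ≤ k + 1 := by omega
    push_cast [Nat.cast_sub this]
    ring
  rw [hcast] at hxh
  have hdR : (d : ℝ) ≤ 5 * (k : ℝ) + 4 := by exact_mod_cast hdk
  have := hxh
  nlinarith [hdR, hxh]
end

section
/- For every ε > 0 there exists a constant C(ε) with the following property. Let g ≥ 2 be an integer, let Q be the product of the distinct primes dividing g, and let p be a prime with p ≡ 1 (mod Q). Let A and B be subsets of ℤ/pℤ such that for every a ∈ A and b ∈ B there exist a prime q dividing g and an element y ∈ ℤ/pℤ with a + b = y^q in ℤ/pℤ. Then |A| · |B| ≤ C(ε) · p^{1+ε}. -/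
/-!
For each prime `q ∣ g` fix a multiplicative character `ψ_q` of order `q`. On `x ≠ 0` the product
`Φ x = ∏_q (1 - q⁻¹ ∑_{j<q} ψ_q(x)^j)` is the indicator that `x` is a `q`-th power for no `q`,
so by hypothesis `∑_{a ∈ A, b ∈ B} Φ (a + b)` only sees pairs with `a + b = 0` and is at most
`|A|`. Expanding the product, the trivial term is `∏_q (1 - 1/q) |A||B| ≥ |A||B| / (ω + 1)`
(`ω` the number of primes), and every other term is a sum over `A × B` of a nontrivial character
(the orders are coprime) evaluated at `a + b`, which is at most `√(p|A||B|)` by orthogonality and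
Cauchy–Schwarz; the coefficients have total mass at most `2^ω`. Hence `|A||B| ≤ 4 · 16^ω p`, and
`ω! ≤ ∏ q ≤ p` turns `16^ω` into `O_ε(p^ε)`.
-/

open Finset Function
open scoped Nat

namespace MulChar

variable {F : Type*} [Field F] [Fintype F]

lemma sum_mul_inv_self (χ : MulChar F ℂ) :
    ∑ x, χ x * χ⁻¹ x = (Fintype.card F : ℂ) - 1 := by
  classical
  simp only [← mul_apply, mul_inv_cancel, sum_one_eq_card_units,
    Fintype.card_units, Nat.cast_sub Fintype.card_pos, Nat.cast_one]

lemma sum_add_mul_inv {χ : MulChar F ℂ} (hχ : χ ≠ 1) {w : F} (hw : w ≠ 0) :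
    ∑ x, χ (x + w) * χ⁻¹ x = -1 := by
  have hsub : ∀ t, χ (-w * (1 - t) + w) * χ⁻¹ (-w * (1 - t)) =
      χ⁻¹ (-1) * (χ t * χ⁻¹ (1 - t)) := by
    intro t
    have hw' : χ w * χ⁻¹ w = 1 := by rw [inv_apply', ← map_mul, mul_inv_cancel₀ hw, map_one]
    rw [show -w * (1 - t) + w = w * t by ring, show -w * (1 - t) = -1 * w * (1 - t) by ring,
      map_mul, map_mul, map_mul]
    linear_combination (χ t * χ⁻¹ (-1) * χ⁻¹ (1 - t)) * hw'
  -- substituting `x = -w * (1 - t)` leaves `χ⁻¹ (-1)` times the Jacobi sum `J(χ, χ⁻¹)`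
  rw [← ((Equiv.subLeft 1).trans (Equiv.mulLeft₀ (-w) (neg_ne_zero.mpr hw))).sum_comp]
  simp only [Equiv.trans_apply, Equiv.subLeft_apply, Equiv.mulLeft₀, Units.mulLeft_apply,
    Units.val_mk0, hsub]
  rw [← mul_sum, ← jacobiSum, jacobiSum_nontrivial_inv hχ, mul_neg, ← mul_apply, inv_mul_cancel,
    one_apply (isUnit_one.neg)]

lemma sum_mul_inv_add_add {χ : MulChar F ℂ} (hχ : χ ≠ 1) (a a' : F) [Decidable (a = a')] :
    ∑ x, χ (a + x) * χ⁻¹ (a' + x) = (if a = a' then (Fintype.card F : ℂ) else 0) - 1 := by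
  rw [← (Equiv.subRight a').sum_comp]
  simp only [Equiv.subRight_apply, add_sub_cancel, show ∀ y, a + (y - a') = y + (a - a') by
    intro y; ring]
  split_ifs with h
  · rw [h, sub_self]
    simp only [add_zero, sum_mul_inv_self]
  · rw [sum_add_mul_inv hχ (sub_ne_zero.mpr h), zero_sub]

lemma sum_norm_sum_add_sq {χ : MulChar F ℂ} (hχ : χ ≠ 1) (A : Finset F) :
    ∑ x, ‖∑ a ∈ A, χ (a + x)‖ ^ 2 = #A * (Fintype.card F - #A) := by
  classical
  apply Complex.ofReal_injective
  have hexpand : ∀ x, ((‖∑ a ∈ A, χ (a + x)‖ ^ 2 : ℝ) : ℂ) =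
      ∑ a ∈ A, ∑ a' ∈ A, χ (a + x) * χ⁻¹ (a' + x) := by
    intro x
    rw [Complex.ofReal_pow, ← Complex.mul_conj', map_sum, sum_mul_sum]
    simp only [starRingEnd_apply, star_apply']
  rw [Complex.ofReal_sum]
  simp only [hexpand]
  rw [sum_comm]
  simp only [sum_comm (s := univ), sum_mul_inv_add_add hχ, sum_sub_distrib, sum_ite_eq,
    sum_const, nsmul_eq_mul]
  simp only [sum_ite_mem, inter_self, sum_const, nsmul_eq_mul, mul_one, Complex.ofReal_mul,
    Complex.ofReal_natCast, Complex.ofReal_sub]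
  ring

lemma norm_sum_sum_add_le {χ : MulChar F ℂ} (hχ : χ ≠ 1) (A B : Finset F) :
    ‖∑ a ∈ A, ∑ b ∈ B, χ (a + b)‖ ≤ √(Fintype.card F * #A * #B) := by
  have hmoment : (∑ b ∈ B, ‖∑ a ∈ A, χ (a + b)‖) ^ 2 ≤ Fintype.card F * #A * #B :=
    calc (∑ b ∈ B, ‖∑ a ∈ A, χ (a + b)‖) ^ 2
        ≤ #B * ∑ b ∈ B, ‖∑ a ∈ A, χ (a + b)‖ ^ 2 := sq_sum_le_card_mul_sum_sq (α := ℝ)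
      _ ≤ #B * ∑ x, ‖∑ a ∈ A, χ (a + x)‖ ^ 2 :=
        mul_le_mul_of_nonneg_left (sum_le_univ_sum_of_nonneg fun _ => sq_nonneg _)
          (Nat.cast_nonneg _)
      _ = #B * (#A * (Fintype.card F - #A)) := by rw [sum_norm_sum_add_sq hχ]
      _ ≤ Fintype.card F * #A * #B := by
        nlinarith [mul_nonneg (Nat.cast_nonneg (α := ℝ) #B) (sq_nonneg (#A : ℝ))]
  calc ‖∑ a ∈ A, ∑ b ∈ B, χ (a + b)‖ = ‖∑ b ∈ B, ∑ a ∈ A, χ (a + b)‖ := by rw [sum_comm]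
    _ ≤ ∑ b ∈ B, ‖∑ a ∈ A, χ (a + b)‖ := norm_sum_le _ _
    _ ≤ √(Fintype.card F * #A * #B) := Real.le_sqrt_of_sq_le hmoment

lemma prod_apply_of_isUnit {ι R R' : Type*} [CommMonoid R] [CommMonoidWithZero R']
    (s : Finset ι) (χ : ι → MulChar R R') {x : R} (hx : IsUnit x) :
    (∏ i ∈ s, χ i) x = ∏ i ∈ s, χ i x := by
  classical
  induction s using Finset.induction_on with
  | empty => exact one_apply hx
  | insert a s ha ih => rw [prod_insert ha, prod_insert ha, mul_apply, ih]

lemma prod_pow_apply {ι R R' : Type*} [CommMonoid R] [CommMonoidWithZero R']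
    {s : Finset ι} (χ : ι → MulChar R R') {e : ι → ℕ} {i₀ : ι} (hi₀ : i₀ ∈ s) (he : e i₀ ≠ 0)
    (x : R) : (∏ i ∈ s, χ i ^ e i) x = ∏ i ∈ s, χ i x ^ e i := by
  by_cases hx : IsUnit x
  · rw [prod_apply_of_isUnit _ _ hx]
    exact prod_congr rfl fun i _ => pow_apply_coe (χ i) (e i) hx.unit
  · rw [map_nonunit _ hx, eq_comm]
    exact prod_eq_zero hi₀ (by rw [map_nonunit _ hx, zero_pow he])

end MulChar

section CoprimeOrders

variable {G ι : Type*} [CommMonoid G]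

lemma orderOf_prod_of_pairwise_coprime (s : Finset ι) (x : ι → G)
    (h : (s : Set ι).Pairwise (Nat.Coprime on fun i => orderOf (x i))) :
    orderOf (∏ i ∈ s, x i) = ∏ i ∈ s, orderOf (x i) := by
  classical
  induction s using Finset.induction_on with
  | empty => simp
  | insert a s ha ih =>
    rw [coe_insert, Set.pairwise_insert] at h
    rw [prod_insert ha, prod_insert ha,
      (Commute.all _ _).orderOf_mul_eq_mul_orderOf_of_coprime, ih h.1]
    rw [ih h.1]
    exact Nat.Coprime.prod_right fun i hi => (h.2 i hi (ne_of_mem_of_not_mem hi ha).symm).1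

lemma prod_pow_ne_one_of_orderOf_coprime [Fintype ι] {x : ι → G} {n : ι → ℕ}
    (hx : ∀ i, orderOf (x i) = n i) (hn : Pairwise (Nat.Coprime on n)) {e : ι → ℕ}
    (he : ∀ i, e i < n i) (he0 : e ≠ 0) : ∏ i, x i ^ e i ≠ 1 := by
  intro h
  apply he0
  funext i
  have hord := orderOf_prod_of_pairwise_coprime univ (fun i => x i ^ e i)
    fun i _ j _ hij => ((hn hij).coprime_dvd_left (hx i ▸ orderOf_pow_dvd _)).coprime_dvd_right
      (hx j ▸ orderOf_pow_dvd _)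
  rw [h, orderOf_one] at hord
  have hi : orderOf (x i ^ e i) = 1 :=
    Nat.eq_one_of_dvd_one (hord ▸ dvd_prod_of_mem _ (mem_univ i))
  rw [orderOf_eq_one_iff, ← orderOf_dvd_iff_pow_eq_one, hx] at hi
  exact Nat.eq_zero_of_dvd_of_lt hi (he i)

end CoprimeOrders

/-- The coefficients of the polynomial `1 - n⁻¹ ∑_{j<n} z ^ j`, whose value at `z = ψ x`
(`ψ` of order `n`, `x ≠ 0`) is `0` or `1` according as `x` is or is not an `n`-th power. -/
noncomputable def nonPowerCoeff (n j : ℕ) : ℂ := (if j = 0 then 1 else 0) - (n : ℂ)⁻¹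

lemma sum_nonPowerCoeff {n : ℕ} (hn : n ≠ 0) : ∑ j ∈ range n, nonPowerCoeff n j = 0 := by
  simp [nonPowerCoeff, sum_sub_distrib, Nat.pos_of_ne_zero hn, hn]

lemma sum_nonPowerCoeff_mul_zero_pow {n : ℕ} (hn : n ≠ 0) :
    ∑ j ∈ range n, nonPowerCoeff n j * 0 ^ j = 1 - (n : ℂ)⁻¹ := by
  rw [sum_eq_single_of_mem 0 (mem_range.mpr (Nat.pos_of_ne_zero hn))
    fun j _ hj => by rw [zero_pow hj, mul_zero]]
  simp [nonPowerCoeff]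

lemma sum_norm_nonPowerCoeff_le {n : ℕ} (hn : n ≠ 0) :
    ∑ j ∈ range n, ‖nonPowerCoeff n j‖ ≤ 2 :=
  calc ∑ j ∈ range n, ‖nonPowerCoeff n j‖
      ≤ ∑ j ∈ range n, ((if j = 0 then 1 else 0) + (n : ℝ)⁻¹) :=
        sum_le_sum fun j _ => (norm_sub_le _ _).trans (by split_ifs <;> simp)
    _ = 2 := by
        rw [sum_add_distrib, sum_ite_eq', if_pos (mem_range.mpr (Nat.pos_of_ne_zero hn)),
          sum_const, card_range, nsmul_eq_mul, mul_inv_cancel₀ (Nat.cast_ne_zero.mpr hn)]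
        norm_num

section PowerSieve

variable {F ι : Type*} [Field F] [Fintype ι]

noncomputable def powerSieve (ψ : ι → MulChar F ℂ) (n : ι → ℕ) (x : F) : ℂ :=
  ∏ i, ∑ j ∈ range (n i), nonPowerCoeff (n i) j * ψ i x ^ j

variable {ψ : ι → MulChar F ℂ} {n : ι → ℕ}

lemma powerSieve_eq_sum [DecidableEq ι] (x : F) :
    powerSieve ψ n x = ∑ e ∈ Fintype.piFinset fun i => range (n i),
      (∏ i, nonPowerCoeff (n i) (e i)) * ∏ i, ψ i x ^ e i := by
  simp only [powerSieve, prod_univ_sum, prod_mul_distrib]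

lemma sum_norm_prod_nonPowerCoeff_le [DecidableEq ι] (hn : ∀ i, n i ≠ 0) :
    ∑ e ∈ Fintype.piFinset (fun i => range (n i)), ‖∏ i, nonPowerCoeff (n i) (e i)‖ ≤
      2 ^ Fintype.card ι := by
  simp only [norm_prod]
  rw [← prod_univ_sum (fun i => range (n i)) fun i j => ‖nonPowerCoeff (n i) j‖]
  calc ∏ i, ∑ j ∈ range (n i), ‖nonPowerCoeff (n i) j‖
      ≤ ∏ _i : ι, (2 : ℝ) :=
        prod_le_prod (fun _ _ => sum_nonneg fun _ _ => norm_nonneg _)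
          fun i _ => sum_norm_nonPowerCoeff_le (hn i)
    _ = 2 ^ Fintype.card ι := by rw [prod_const, card_univ]

variable [Fintype F]

lemma powerSieve_pow_eq_zero (hψ : ∀ i, orderOf (ψ i) = n i) (i : ι) {y : F} (hy : y ≠ 0) :
    powerSieve ψ n (y ^ n i) = 0 := by
  have hψy : ψ i (y ^ n i) = 1 := by
    rw [map_pow, ← Units.val_mk0 hy, ← MulChar.pow_apply_coe, ← hψ i, pow_orderOf_eq_one,
      MulChar.one_apply_coe]
  refine prod_eq_zero (mem_univ i) ?_
  simp only [hψy, one_pow, mul_one]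
  exact sum_nonPowerCoeff (hψ i ▸ (orderOf_pos (ψ i)).ne')

lemma norm_powerSieve_zero_le (hψ : ∀ i, orderOf (ψ i) = n i) : ‖powerSieve ψ n 0‖ ≤ 1 := by
  have hn : ∀ i, n i ≠ 0 := fun i => hψ i ▸ (orderOf_pos (ψ i)).ne'
  simp only [powerSieve, MulChar.map_zero, sum_nonPowerCoeff_mul_zero_pow (hn _), norm_prod]
  refine prod_le_one (fun _ _ => norm_nonneg _) fun i _ => ?_
  have h1 : (1 : ℝ) ≤ n i := Nat.one_le_cast.mpr (Nat.pos_of_ne_zero (hn i))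
  rw [show (1 : ℂ) - (n i : ℂ)⁻¹ = ((1 - (n i : ℝ)⁻¹ : ℝ) : ℂ) by push_cast; rfl,
    Complex.norm_real, Real.norm_of_nonneg (sub_nonneg.mpr (inv_le_one_of_one_le₀ h1))]
  exact sub_le_self _ (inv_nonneg.mpr (by linarith))

lemma norm_sum_sum_prod_pow_le [DecidableEq ι] (hψ : ∀ i, orderOf (ψ i) = n i)
    (hn : Pairwise (Nat.Coprime on n))
    {e : ι → ℕ} (he : e ∈ Fintype.piFinset fun i => range (n i)) (he0 : e ≠ 0)
    (A B : Finset F) :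
    ‖∑ a ∈ A, ∑ b ∈ B, ∏ i, ψ i (a + b) ^ e i‖ ≤ √(Fintype.card F * #A * #B) := by
  obtain ⟨i₀, hi₀⟩ := Function.ne_iff.mp he0
  simp only [← MulChar.prod_pow_apply ψ (mem_univ i₀) hi₀]
  refine MulChar.norm_sum_sum_add_le (prod_pow_ne_one_of_orderOf_coprime hψ hn ?_ he0) A B
  exact fun i => mem_range.mp (Fintype.mem_piFinset.mp he i)

lemma norm_sum_sum_powerSieve_le (hψ : ∀ i, orderOf (ψ i) = n i) {A B : Finset F}
    (hAB : ∀ a ∈ A, ∀ b ∈ B, ∃ i, ∃ y : F, a + b = y ^ n i) :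
    ‖∑ a ∈ A, ∑ b ∈ B, powerSieve ψ n (a + b)‖ ≤ √(Fintype.card F * #A * #B) := by
  classical
  rcases B.eq_empty_or_nonempty with rfl | hB
  · simp
  have hrow : ∀ a ∈ A, ∑ b ∈ B, powerSieve ψ n (a + b) =
      if -a ∈ B then powerSieve ψ n 0 else 0 := by
    intro a ha
    rw [← sum_ite_eq' B (-a) fun _ => powerSieve ψ n 0]
    refine sum_congr rfl fun b hb => ?_
    split_ifs with hab
    · rw [hab, add_neg_cancel]
    obtain ⟨i, y, hy⟩ := hAB a ha b hb
    have hab0 : a + b ≠ 0 := fun h => hab (by linear_combination h)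
    have hy0 : y ≠ 0 := by
      rintro rfl
      exact hab0 (hy.trans (zero_pow (hψ i ▸ (orderOf_pos (ψ i)).ne')))
    rw [hy, powerSieve_pow_eq_zero hψ i hy0]
  have hA : (#A : ℝ) ^ 2 ≤ Fintype.card F * #A * #B := by
    have hAF : (#A : ℝ) ≤ Fintype.card F := Nat.cast_le.mpr (card_le_univ A)
    have hB1 : (1 : ℝ) ≤ #B := Nat.one_le_cast.mpr hB.card_pos
    calc (#A : ℝ) ^ 2 = #A * #A := sq _
      _ ≤ Fintype.card F * #A * 1 := by rw [mul_one, mul_comm]; gcongr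
      _ ≤ Fintype.card F * #A * #B := by gcongr
  calc ‖∑ a ∈ A, ∑ b ∈ B, powerSieve ψ n (a + b)‖
      ≤ ∑ a ∈ A, ‖∑ b ∈ B, powerSieve ψ n (a + b)‖ := norm_sum_le _ _
    _ ≤ ∑ _a ∈ A, (1 : ℝ) := sum_le_sum fun a ha => by
        rw [hrow a ha]
        split_ifs
        exacts [norm_powerSieve_zero_le hψ, by simp]
    _ = #A := by rw [sum_const, nsmul_one]
    _ ≤ √(Fintype.card F * #A * #B) := Real.le_sqrt_of_sq_le hA

theorem prod_one_sub_inv_mul_card_mul_card_le (hψ : ∀ i, orderOf (ψ i) = n i)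
    (hn : Pairwise (Nat.Coprime on n)) {A B : Finset F}
    (hAB : ∀ a ∈ A, ∀ b ∈ B, ∃ i, ∃ y : F, a + b = y ^ n i) :
    (∏ i, (1 - (n i : ℝ)⁻¹)) * (#A * #B) ≤
      (2 ^ Fintype.card ι + 1) * √(Fintype.card F * #A * #B) := by
  classical
  set P := Fintype.piFinset fun i => range (n i)
  set R := √(Fintype.card F * #A * #B)
  set c : (ι → ℕ) → ℂ := fun e => ∏ i, nonPowerCoeff (n i) (e i)
  set T : (ι → ℕ) → ℂ := fun e => ∑ a ∈ A, ∑ b ∈ B, ∏ i, ψ i (a + b) ^ e i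
  have hn0 : ∀ i, n i ≠ 0 := fun i => hψ i ▸ (orderOf_pos (ψ i)).ne'
  have hP0 : (0 : ι → ℕ) ∈ P :=
    Fintype.mem_piFinset.mpr fun i => mem_range.mpr (Nat.pos_of_ne_zero (hn0 i))
  have hexpand : ∑ a ∈ A, ∑ b ∈ B, powerSieve ψ n (a + b) = ∑ e ∈ P, c e * T e := by
    simp only [powerSieve_eq_sum, c, T, mul_sum]
    exact (sum_congr rfl fun _ _ => sum_comm).trans sum_comm
  have hmain : c 0 * T 0 = ((∏ i, (1 - (n i : ℝ)⁻¹)) * (#A * #B) : ℝ) := by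
    simp [c, T, nonPowerCoeff]
  have hmain_nonneg : 0 ≤ (∏ i, (1 - (n i : ℝ)⁻¹)) * (#A * #B) :=
    mul_nonneg (prod_nonneg fun i _ => sub_nonneg.mpr
      (inv_le_one_of_one_le₀ (Nat.one_le_cast.mpr (Nat.pos_of_ne_zero (hn0 i))))) (by positivity)
  calc (∏ i, (1 - (n i : ℝ)⁻¹)) * (#A * #B)
      = ‖c 0 * T 0‖ := by rw [hmain, Complex.norm_real, Real.norm_of_nonneg hmain_nonneg]
    _ = ‖∑ a ∈ A, ∑ b ∈ B, powerSieve ψ n (a + b) - ∑ e ∈ P.erase 0, c e * T e‖ := by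
        rw [hexpand, ← add_sum_erase _ _ hP0, add_sub_cancel_right]
    _ ≤ R + ∑ e ∈ P.erase 0, ‖c e‖ * R := by
        refine (norm_sub_le _ _).trans (add_le_add (norm_sum_sum_powerSieve_le hψ hAB) ?_)
        refine (norm_sum_le _ _).trans (sum_le_sum fun e he => ?_)
        rw [norm_mul]
        exact mul_le_mul_of_nonneg_left (norm_sum_sum_prod_pow_le hψ hn (mem_of_mem_erase he)
          (ne_of_mem_erase he) A B) (norm_nonneg _)
    _ ≤ R + 2 ^ Fintype.card ι * R := by
        rw [← sum_mul]
        gcongr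
        exact (sum_le_sum_of_subset_of_nonneg (erase_subset _ _) fun _ _ _ => norm_nonneg _).trans
          (sum_norm_prod_nonPowerCoeff_le hn0)
    _ = (2 ^ Fintype.card ι + 1) * R := by ring

end PowerSieve

namespace Finset

lemma prod_range_le_prod_of_monotoneOn {R : Type*} [CommSemiring R] [PartialOrder R]
    [IsOrderedRing R] {f : ℕ → R} {k : ℕ} (hf : MonotoneOn f (Set.Ici k))
    (hf0 : ∀ m, k ≤ m → 0 ≤ f m) (s : Finset ℕ) (hs : ∀ x ∈ s, k ≤ x) :
    ∏ i ∈ range #s, f (i + k) ≤ ∏ x ∈ s, f x := by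
  induction s using Finset.induction_on_max with
  | empty => simp
  | insert a s hlt ih =>
    have ha : a ∉ s := fun h => lt_irrefl a (hlt a h)
    have hks : ∀ x ∈ s, k ≤ x := fun x hx => hs x (mem_insert_of_mem hx)
    have hka : k ≤ a := hs a (mem_insert_self a s)
    have hcard : #s + k ≤ a := by
      have := card_le_card fun x hx => mem_Ico.mpr ⟨hks x hx, hlt x hx⟩
      rw [Nat.card_Ico] at this
      omega
    rw [card_insert_of_notMem ha, prod_range_succ, prod_insert ha, mul_comm (f a)]
    exact mul_le_mul (ih hks) (hf (Set.mem_Ici.mpr (Nat.le_add_left k _)) hka hcard)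
      (hf0 _ (Nat.le_add_left k _)) (prod_nonneg fun x hx => hf0 x (hks x hx))

end Finset

lemma Nat.factorial_card_le_prod (s : Finset ℕ) (hs : ∀ q ∈ s, 0 < q) : (#s)! ≤ ∏ q ∈ s, q := by
  rw [← prod_range_add_one_eq_factorial]
  exact prod_range_le_prod_of_monotoneOn (f := id) monotoneOn_id (fun _ _ => Nat.zero_le _) s hs

lemma prod_range_one_sub_inv (m : ℕ) :
    ∏ i ∈ range m, (1 - ((i + 2 : ℕ) : ℝ)⁻¹) = ((m : ℝ) + 1)⁻¹ := by
  induction m with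
  | zero => simp
  | succ m ih =>
    rw [prod_range_succ, ih]
    push_cast
    field_simp
    ring

lemma inv_card_add_one_le_prod_one_sub_inv (s : Finset ℕ) (hs : ∀ q ∈ s, 2 ≤ q) :
    ((#s : ℝ) + 1)⁻¹ ≤ ∏ q ∈ s, (1 - (q : ℝ)⁻¹) := by
  rw [← prod_range_one_sub_inv]
  refine prod_range_le_prod_of_monotoneOn (f := fun q : ℕ => 1 - (q : ℝ)⁻¹)
    (fun x hx y _ hxy => ?_) (fun m hm => ?_) s hs
  · have hx0 : (0 : ℝ) < x := by exact_mod_cast (show 0 < x by simp at hx; omega)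
    exact sub_le_sub_left (inv_anti₀ hx0 (by exact_mod_cast hxy)) 1
  · exact sub_nonneg.mpr (inv_le_one_of_one_le₀ (by exact_mod_cast (show 1 ≤ m by omega)))

lemma Real.pow_le_exp_mul_factorial_rpow {c ε : ℝ} (hc : 0 ≤ c) (hε : 0 < ε) (k : ℕ) :
    c ^ k ≤ (Real.exp (c ^ ε⁻¹) * k !) ^ ε := by
  set x := c ^ ε⁻¹
  have hx : 0 ≤ x := Real.rpow_nonneg hc _
  have hck : c ^ k = (x ^ k) ^ ε := by
    rw [← Real.rpow_natCast x k, ← Real.rpow_mul hc, ← Real.rpow_mul hc,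
      show ε⁻¹ * k * ε = k by field_simp, Real.rpow_natCast]
  rw [hck]
  refine Real.rpow_le_rpow (pow_nonneg hx k) ?_ hε.le
  exact (div_le_iff₀ (by positivity)).mp (Real.pow_div_factorial_le_exp x hx k)

lemma le_sq_mul_of_le_mul_sqrt {K c x : ℝ} (hK : 0 ≤ K) (hx : 0 ≤ x)
    (h : K ≤ c * √(x * K)) : K ≤ c ^ 2 * x := by
  rcases hK.eq_or_lt with rfl | hKpos
  · positivity
  have hsq : K * K ≤ c ^ 2 * x * K := by
    calc K * K ≤ (c * √(x * K)) * (c * √(x * K)) := mul_self_le_mul_self hK h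
      _ = c ^ 2 * x * K := by
        rw [mul_mul_mul_comm, Real.mul_self_sqrt (by positivity)]
        ring
  exact le_of_mul_le_mul_right hsq hKpos

theorem card_mul_card_le_of_forall_add_eq_pow {F : Type*} [Field F] [Fintype F] {S : Finset ℕ}
    (hS : ∀ q ∈ S, q.Prime ∧ q ∣ Fintype.card F - 1) {A B : Finset F}
    (hAB : ∀ a ∈ A, ∀ b ∈ B, ∃ q ∈ S, ∃ y : F, a + b = y ^ q) :
    (#A * #B : ℝ) ≤ 4 * 16 ^ #S * Fintype.card F := by
  classical
  have hchar : ∀ q : S, ∃ χ : MulChar F ℂ, orderOf χ = q := fun q =>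
    MulChar.exists_mulChar_orderOf F (hS q q.2).2
      (Complex.isPrimitiveRoot_exp q (hS q q.2).1.ne_zero)
  choose ψ hψ using hchar
  have hcop : Pairwise (Nat.Coprime on fun q : S => (q : ℕ)) := fun q r hqr =>
    (Nat.coprime_primes (hS q q.2).1 (hS r r.2).1).mpr (Subtype.coe_injective.ne hqr)
  have hsieve := prod_one_sub_inv_mul_card_mul_card_le hψ hcop (A := A) (B := B)
    fun a ha b hb => by
      obtain ⟨q, hq, y, hy⟩ := hAB a ha b hb
      exact ⟨⟨q, hq⟩, y, hy⟩
  rw [prod_coe_sort S fun q => 1 - (q : ℝ)⁻¹, Fintype.card_coe, mul_assoc (Fintype.card F : ℝ)]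
    at hsieve
  have hlow := inv_card_add_one_le_prod_one_sub_inv S fun q hq => (hS q hq).1.two_le
  have hK : (#A * #B : ℝ) ≤ ((#S + 1) * (2 ^ #S + 1)) * √(Fintype.card F * (#A * #B)) := by
    rw [mul_assoc, ← inv_mul_le_iff₀ (by positivity)]
    exact (mul_le_mul_of_nonneg_right hlow (by positivity)).trans hsieve
  have hconst : (((#S + 1) * (2 ^ #S + 1)) ^ 2 : ℝ) ≤ 4 * 16 ^ #S := by
    have h1 : (#S : ℝ) + 1 ≤ 2 ^ #S := by exact_mod_cast Nat.lt_two_pow_self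
    have h2 : (2 : ℝ) ^ #S + 1 ≤ 2 * 2 ^ #S := by
      linarith [one_le_pow₀ (M₀ := ℝ) one_le_two (n := #S)]
    calc (((#S + 1) * (2 ^ #S + 1)) ^ 2 : ℝ) ≤ (2 ^ #S * (2 * 2 ^ #S)) ^ 2 := by gcongr
      _ = 4 * 16 ^ #S := by rw [show (16 : ℝ) = 2 ^ 4 by norm_num, ← pow_mul]; ring
  calc (#A * #B : ℝ) ≤ ((#S + 1) * (2 ^ #S + 1)) ^ 2 * Fintype.card F :=
        le_sq_mul_of_le_mul_sqrt (by positivity) (by positivity) hK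
    _ ≤ 4 * 16 ^ #S * Fintype.card F := by gcongr

/-- Character sum bound: if every `a + b` with `a ∈ A`, `b ∈ B` is a `q`-th
power residue mod `p` for some prime `q ∣ g`, where `p ≡ 1 (mod rad g)`,
then `|A| |B| ≤ C(ε) p^(1+ε)`. -/
theorem stmt_16 :
    ∀ ε : ℝ, 0 < ε → ∃ C : ℝ, ∀ g : ℕ, 2 ≤ g →
      ∀ p : ℕ, p.Prime → p ≡ 1 [MOD ∏ q ∈ g.primeFactors, q] →
        ∀ A B : Finset (ZMod p),
          (∀ a ∈ A, ∀ b ∈ B, ∃ q ∈ g.primeFactors, ∃ y : ZMod p, a + b = y ^ q) →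
          (A.card : ℝ) * (B.card : ℝ) ≤ C * (p : ℝ) ^ (1 + ε) := by
  intro ε hε
  refine ⟨4 * Real.exp (16 ^ ε⁻¹) ^ ε, fun g _ p hp hmod A B hAB => ?_⟩
  have := Fact.mk hp
  set S := g.primeFactors
  have hdvd : ∏ q ∈ S, q ∣ p - 1 := (Nat.modEq_iff_dvd' hp.one_lt.le).mp hmod.symm
  have hS : ∀ q ∈ S, q.Prime ∧ q ∣ Fintype.card (ZMod p) - 1 := fun q hq =>
    ⟨Nat.prime_of_mem_primeFactors hq, by rw [ZMod.card]; exact (dvd_prod_of_mem _ hq).trans hdvd⟩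
  have hfact : ((#S)! : ℝ) ≤ p := by
    have := (Nat.factorial_card_le_prod S fun q hq => (Nat.prime_of_mem_primeFactors hq).pos).trans
      ((Nat.le_of_dvd (Nat.sub_pos_of_lt hp.one_lt) hdvd).trans (Nat.sub_le p 1))
    exact_mod_cast this
  have hp0 : (0 : ℝ) < p := by exact_mod_cast hp.pos
  calc (#A : ℝ) * #B ≤ 4 * 16 ^ #S * p := by
        simpa only [ZMod.card] using card_mul_card_le_of_forall_add_eq_pow hS hAB
    _ ≤ 4 * (Real.exp (16 ^ ε⁻¹) * (#S)!) ^ ε * p := by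
        gcongr
        exact Real.pow_le_exp_mul_factorial_rpow (by norm_num) hε _
    _ ≤ 4 * (Real.exp (16 ^ ε⁻¹) * p) ^ ε * p := by gcongr
    _ = 4 * Real.exp (16 ^ ε⁻¹) ^ ε * (p : ℝ) ^ (1 + ε) := by
        rw [Real.mul_rpow (Real.exp_pos _).le hp0.le, Real.rpow_add hp0, Real.rpow_one]
        ring
end

section
/- Let b and t be positive integers and k ≥ 2 an integer such that b, b+t, b+2t, …, b+(k−1)t are all powerful numbers. Then every prime p with 2p ≤ k divides t. -/
theorem Nat.Prime.exists_lt_dvd_add_mul {p t : ℕ} (hp : p.Prime) (hpt : ¬p ∣ t) (b : ℕ) :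
    ∃ j < p, p ∣ b + j * t := by
  have := Fact.mk hp
  have ht : (t : ZMod p) ≠ 0 := by rwa [Ne, ZMod.natCast_eq_zero_iff]
  refine ⟨(-(b : ZMod p) * (t : ZMod p)⁻¹).val, ZMod.val_lt _, ?_⟩
  rw [← ZMod.natCast_eq_zero_iff]
  push_cast
  rw [ZMod.natCast_zmod_val, mul_assoc, inv_mul_cancel₀ ht]
  ring

theorem Nat.dvd_of_sq_dvd_of_sq_dvd_add_mul {p a t : ℕ} (hp : 0 < p) (ha : p ^ 2 ∣ a)
    (hat : p ^ 2 ∣ a + p * t) : p ∣ t := by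
  have hpt : p * p ∣ p * t := by rw [← sq]; exact (Nat.dvd_add_right ha).mp hat
  exact (Nat.mul_dvd_mul_iff_left hp).mp hpt

theorem Powerful.dvd_of_dvd_of_powerful_add_mul {p a t : ℕ} (hp : p.Prime) (ha : Powerful a)
    (hat : Powerful (a + p * t)) (hpa : p ∣ a) : p ∣ t :=
  Nat.dvd_of_sq_dvd_of_sq_dvd_add_mul hp.pos (ha.2 p hp hpa)
    (hat.2 p hp (dvd_add hpa (dvd_mul_right p t)))

theorem stmt_18_general (b t : ℕ) (k : ℕ)
    (hW : ∀ j : ℕ, j < k → Powerful (b + j * t)) :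
    ∀ p : ℕ, p.Prime → 2 * p ≤ k → p ∣ t := by
  intro p hp hpk
  by_contra hpt
  obtain ⟨j, hjp, hj⟩ := hp.exists_lt_dvd_add_mul hpt b
  have hshift : b + (j + p) * t = b + j * t + p * t := by ring
  have hjpk := hW (j + p) (by omega)
  rw [hshift] at hjpk
  exact hpt ((hW j (by omega)).dvd_of_dvd_of_powerful_add_mul hp hjpk hj)

/-- If `b, b+t, …, b+(k-1)t` are all powerful, then every prime `p` with
`2p ≤ k` divides `t`. -/
theorem stmt_18 (b t : ℕ) (hb : 0 < b) (ht : 0 < t) (k : ℕ) (hk : 2 ≤ k)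
    (hW : ∀ j : ℕ, j < k → Powerful (b + j * t)) :
    ∀ p : ℕ, p.Prime → 2 * p ≤ k → p ∣ t :=
  stmt_18_general b t k hW
end
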